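/- arXiv:2305.12284 — 15 statements merged into one kernel-verified Lean document; each statement's English description precedes it below -/
import Mathlib

section
/- Let n, r, s, m be positive integers, h_1,…,h_r ∈ ℝ^n, b ∈ ℝ^r, V_1,…,V_s ∈ ℝ^{n×n}, v ∈ ℝ^s. Define the polyhedra S = {x ∈ ℝ^n : h_i^T x ≤ b_i, i = 1,…,r} and U_0 = {A ∈ ℝ^{n×n} : Tr(V_j^T A) ≤ v_j, j = 1,…,s}. Let x_1,…,x_m, y_1,…,y_m ∈ ℝ^n and U_m = {A ∈ U_0 : A x_k = y_k, k = 1,…,m}, and assume U_m is nonempty. Then for every x ∈ ℝ^n the following are equivalent: (i) x ∈ S and A x ∈ S for all A ∈ U_m; (ii) there exist vectors μ^{(i)} ∈ ℝ^s with μ^{(i)} ≥ 0 (componentwise) and η_1^{(i)},…,η_m^{(i)} ∈ ℝ^n, for i = 1,…,r, such that for every i = 1,…,r: h_i^T x ≤ b_i, ∑_{k=1}^m y_k^T η_k^{(i)} + ∑_{j=1}^s μ_j^{(i)} v_j ≤ b_i, and x h_i^T = ∑_{k=1}^m x_k (η_k^{(i)})^T + ∑_{j=1}^s μ_j^{(i)}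 V_j^T (an equality of n×n matrices). -/
/-!
Fix a row `i`. The condition `A *ᵥ z ∈ S` for all `A ∈ Um` says that the linear program
"maximize `h i ⬝ᵥ (A *ᵥ z)` over the polyhedron `Um` of matrices" has value at most `b i`.
Writing every constraint and the objective as a trace functional `A ↦ trace (W * A)`, LP duality
(the affine Farkas lemma) turns this into the existence of multipliers `μ ≥ 0` for the
inequalities `trace ((V j)ᵀ * A) ≤ v j` and free multipliers `η` for the equalities
`A *ᵥ x k = y k`, whose combination reproduces the objective matrix `vecMulVec z (h i)` and whose
dual value is at most `b i`. The converse is weak duality. The Farkas lemma itself is reduced to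
separating a point from a finitely generated cone, which is closed by the conic Carathéodory
theorem.
-/

open Function Set PointedCone Matrix

section Caratheodory

variable {𝕜 E ι : Type*} [Field 𝕜] [LinearOrder 𝕜] [IsStrictOrderedRing 𝕜]
  [AddCommGroup E] [Module 𝕜 E] [Fintype ι] {c : ι → E}

theorem exists_pos_relation_of_not_linearIndepOn {s : Set ι} (h : ¬LinearIndepOn 𝕜 c s) :
    ∃ g : ι → 𝕜, ∑ t, g t • c t = 0 ∧ support g ⊆ s ∧ ∃ t, 0 < g t := by
  classical
  rw [← s.coe_toFinset, not_linearIndepOn_finset_iff] at h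
  obtain ⟨f, hf, t, ht, hft⟩ := h
  rw [Set.mem_toFinset] at ht
  have hrel : ∀ a : 𝕜, ∑ u, (if u ∈ s then a * f u else 0) • c u = 0 := by
    intro a
    simp only [ite_smul, zero_smul, ← Finset.sum_filter, mul_smul, ← Finset.smul_sum]
    rw [Set.filter_mem_univ_eq_toFinset, hf, smul_zero]
  have hsupp : ∀ a : 𝕜, support (fun u => if u ∈ s then a * f u else 0) ⊆ s :=
    fun a u hu => by_contra fun hus => hu (if_neg hus)
  rcases hft.lt_or_gt with hneg | hpos
  · exact ⟨_, hrel (-1), hsupp (-1), t, by simpa [ht] using hneg⟩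
  · exact ⟨_, hrel 1, hsupp 1, t, by simpa [ht] using hpos⟩

theorem exists_support_ssubset_of_not_linearIndepOn {l : ι → 𝕜} (hl : 0 ≤ l)
    (h : ¬LinearIndepOn 𝕜 c (support l)) :
    ∃ l' : ι → 𝕜, 0 ≤ l' ∧ ∑ t, l' t • c t = ∑ t, l t • c t ∧ support l' ⊂ support l := by
  classical
  obtain ⟨g, hg, hgl, hpos⟩ := exists_pos_relation_of_not_linearIndepOn h
  obtain ⟨t₀, ht₀, hmin⟩ := (Finset.univ.filter fun t => 0 < g t).exists_min_image
    (fun t => l t / g t) (by simpa [Finset.Nonempty] using hpos)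
  simp only [Finset.mem_filter, Finset.mem_univ, true_and] at ht₀ hmin
  -- move along the relation until the first coefficient vanishes
  set α := l t₀ / g t₀
  have hα : 0 ≤ α := div_nonneg (hl t₀) ht₀.le
  refine ⟨fun t => l t - α * g t, fun t => ?_, ?_, ?_⟩
  · rcases le_or_gt (g t) 0 with hgt | hgt
    · simpa using add_nonneg (hl t) (mul_nonneg hα (neg_nonneg.mpr hgt))
    · simpa [le_div_iff₀ hgt] using hmin t hgt
  · simp only [sub_smul, Finset.sum_sub_distrib, mul_smul, ← Finset.smul_sum, hg, smul_zero,
      sub_zero]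
  · refine ssubset_of_subset_not_subset (fun t ht => ?_) fun hsub => hsub (hgl ht₀.ne') ?_
    · by_contra hlt
      have hgt : g t = 0 := not_not.mp fun hgt => hlt (hgl hgt)
      exact ht (by simp [notMem_support.mp hlt, hgt])
    · simp [α, ht₀.ne']

theorem exists_linearIndepOn_support_of_nonneg {l : ι → 𝕜} (hl : 0 ≤ l) :
    ∃ l' : ι → 𝕜, 0 ≤ l' ∧ LinearIndepOn 𝕜 c (support l') ∧
      ∑ t, l' t • c t = ∑ t, l t • c t := by
  induction hs : support l using WellFoundedLT.induction generalizing l with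
  | _ s ih =>
    by_cases hli : LinearIndepOn 𝕜 c (support l)
    · exact ⟨l, hl, hli, rfl⟩
    · obtain ⟨l₁, hl₁, hsum₁, hlt⟩ := exists_support_ssubset_of_not_linearIndepOn hl hli
      obtain ⟨l', hl', hli', hsum'⟩ := ih _ (hs ▸ hlt) hl₁ rfl
      exact ⟨l', hl', hli', hsum'.trans hsum₁⟩

end Caratheodory

namespace PointedCone

variable {ι : Type*} [Fintype ι]

theorem mem_hull_range_iff {R E : Type*} [Semiring R] [PartialOrder R] [IsOrderedRing R]
    [AddCommMonoid E] [Module R E] {c : ι → E} {w : E} :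
    w ∈ hull R (range c) ↔ ∃ l : ι → R, 0 ≤ l ∧ ∑ t, l t • c t = w := by
  rw [Submodule.mem_span_range_iff_exists_fun]
  constructor
  · rintro ⟨a, rfl⟩
    exact ⟨fun t => a t, fun t => (a t).2, rfl⟩
  · rintro ⟨l, hl, rfl⟩
    exact ⟨fun t => ⟨l t, hl t⟩, rfl⟩

theorem hull_range_eq_iUnion_linearIndepOn {𝕜 E : Type*} [Field 𝕜] [LinearOrder 𝕜]
    [IsStrictOrderedRing 𝕜] [AddCommGroup E] [Module 𝕜 E] (c : ι → E) :
    (hull 𝕜 (range c) : Set E) = ⋃ (T : Finset ι) (_ : LinearIndepOn 𝕜 c T),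
      Fintype.linearCombination 𝕜 (fun t : T => c t) '' {μ | 0 ≤ μ} := by
  classical
  refine Subset.antisymm (fun w hw => ?_) ?_
  · obtain ⟨l, hl, rfl⟩ := mem_hull_range_iff.mp hw
    obtain ⟨l', hl', hli, hsum⟩ := exists_linearIndepOn_support_of_nonneg (c := c) hl
    refine mem_iUnion₂.mpr
      ⟨(support l').toFinset, by simpa using hli, fun t => l' t, fun t => hl' t, ?_⟩
    rw [Fintype.linearCombination_apply, ← hsum,
      Finset.sum_coe_sort (support l').toFinset fun t => l' t • c t]
    exact Finset.sum_subset (Finset.subset_univ _) fun t _ ht => by simp_all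
  · simp only [iUnion_subset_iff]
    rintro T - _ ⟨μ, hμ, rfl⟩
    rw [Fintype.linearCombination_apply]
    exact Submodule.sum_mem _ fun t _ => smul_mem _ (hμ t) (subset_hull (mem_range_self _))

section Topology

variable {E : Type*} [AddCommGroup E] [Module ℝ E] [TopologicalSpace E] [IsTopologicalAddGroup E]
  [ContinuousSMul ℝ E] [T2Space E]

theorem isClosed_hull_range (c : ι → E) : IsClosed (hull ℝ (range c) : Set E) := by
  rw [hull_range_eq_iUnion_linearIndepOn]
  refine isClosed_iUnion_of_finite fun T => isClosed_iUnion_of_finite fun hT => ?_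
  refine (LinearMap.isClosedEmbedding_of_injective ?_).isClosedMap _ (isClosed_Ici (a := 0))
  exact LinearMap.ker_eq_bot.mpr (linearIndependent_iff_injective_fintypeLinearCombination.mp hT)

theorem exists_strongDual_of_notMem_hull_range [LocallyConvexSpace ℝ E] (c : ι → E) {w : E}
    (hw : w ∉ hull ℝ (range c)) : ∃ f : StrongDual ℝ E, (∀ t, 0 ≤ f (c t)) ∧ f w < 0 := by
  obtain ⟨f, hf, hfw⟩ := ProperCone.hyperplane_separation_point
    ⟨hull ℝ (range c), isClosed_hull_range c⟩ hw
  exact ⟨f, fun t => hf _ (subset_hull (mem_range_self t)), hfw⟩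

end Topology

theorem exists_dual_of_notMem_hull_range {F : Type*} [AddCommGroup F] [Module ℝ F]
    [FiniteDimensional ℝ F] (c : ι → F) {w : F} (hw : w ∉ hull ℝ (range c)) :
    ∃ f : Module.Dual ℝ F, (∀ t, 0 ≤ f (c t)) ∧ f w < 0 := by
  let e := (Module.finBasis ℝ F).equivFun
  have hew : e w ∉ hull ℝ (range (e ∘ c)) := fun h => hw <| by
    obtain ⟨l, hl, hsum⟩ := mem_hull_range_iff.mp h
    refine mem_hull_range_iff.mpr ⟨l, hl, e.injective ?_⟩
    simpa [map_sum] using hsum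
  obtain ⟨f, hf, hfw⟩ := exists_strongDual_of_notMem_hull_range _ hew
  exact ⟨(f : _ →ₗ[ℝ] ℝ) ∘ₗ e.toLinearMap, hf, hfw⟩

end PointedCone

namespace Module.Dual

variable {ι E : Type*} [AddCommGroup E] [Module ℝ E] {φ : ι → Dual ℝ E} {d : ι → ℝ}
  {ψ : Dual ℝ E} {β : ℝ}

theorem le_mul_of_le_on_feasible (hfeas : ∃ A, ∀ t, φ t A ≤ d t)
    (hbdd : ∀ A, (∀ t, φ t A ≤ d t) → ψ A ≤ β) {A : E} {τ : ℝ} (hτ : 0 ≤ τ)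
    (hA : ∀ t, φ t A ≤ τ * d t) : ψ A ≤ τ * β := by
  rcases hτ.eq_or_lt with rfl | hτ
  · -- `A` is a recession direction: move from a feasible point along it
    obtain ⟨A₀, hA₀⟩ := hfeas
    simp only [zero_mul] at hA ⊢
    by_contra! hψA
    have hfeas' : ∀ t, φ t (A₀ + ((β - ψ A₀ + 1) / ψ A) • A) ≤ d t := fun t => by
      simp only [map_add, map_smul, smul_eq_mul]
      nlinarith [hA₀ t, hA t, div_nonneg (by linarith [hbdd A₀ hA₀] : 0 ≤ β - ψ A₀ + 1) hψA.le]
    have := hbdd _ hfeas'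
    simp only [map_add, map_smul, smul_eq_mul, div_mul_cancel₀ _ hψA.ne'] at this
    linarith
  · have := hbdd (τ⁻¹ • A) fun t => by
      simpa [inv_mul_le_iff₀ hτ] using hA t
    simpa [inv_mul_le_iff₀ hτ] using this

variable [Fintype ι] [FiniteDimensional ℝ E]

theorem affine_farkas (hfeas : ∃ A, ∀ t, φ t A ≤ d t)
    (hbdd : ∀ A, (∀ t, φ t A ≤ d t) → ψ A ≤ β) :
    ∃ l : ι → ℝ, 0 ≤ l ∧ ψ = ∑ t, l t • φ t ∧ ∑ t, l t * d t ≤ β := by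
  -- homogenize: separate `(ψ, β)` from the cone spanned by the `(φ t, d t)` and `(0, 1)`
  let c : Option ι → Dual ℝ E × ℝ := fun o => o.elim (0, 1) fun t => (φ t, d t)
  by_cases hmem : (ψ, β) ∈ hull ℝ (range c)
  · obtain ⟨l, hl, hsum⟩ := mem_hull_range_iff.mp hmem
    simp only [Fintype.sum_option, c, Option.elim, Prod.ext_iff, Prod.fst_add, Prod.snd_add,
      Prod.smul_fst, Prod.smul_snd, Prod.fst_sum, Prod.snd_sum, smul_zero, zero_add,
      smul_eq_mul, mul_one] at hsum
    exact ⟨fun t => l (some t), fun t => hl _, hsum.1.symm,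
      hsum.2 ▸ le_add_of_nonneg_left (hl none)⟩
  · obtain ⟨Λ, hΛ, hΛw⟩ := exists_dual_of_notMem_hull_range c hmem
    let A := (evalEquiv ℝ E).symm (Λ ∘ₗ LinearMap.inl ℝ _ ℝ)
    have hA : ∀ f : Dual ℝ E, f A = Λ (f, 0) := fun f =>
      LinearMap.congr_fun ((evalEquiv ℝ E).apply_symm_apply _) f
    have hΛ_apply : ∀ f s, Λ (f, s) = f A + s * Λ (0, 1) := fun f s => by
      have hsplit : ((f, s) : Dual ℝ E × ℝ) = (f, 0) + s • (0, 1) := by simp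
      rw [hsplit, map_add, map_smul, hA, smul_eq_mul]
    have hτ : 0 ≤ Λ (0, 1) := hΛ none
    have hfeasA : ∀ t, φ t (-A) ≤ Λ (0, 1) * d t := fun t => by
      have : 0 ≤ Λ (φ t, d t) := hΛ (some t)
      rw [hΛ_apply] at this
      rw [map_neg]
      linarith
    have := le_mul_of_le_on_feasible hfeas hbdd hτ hfeasA
    rw [hΛ_apply] at hΛw
    rw [map_neg] at this
    linarith

theorem affine_farkas_of_eq {κ : Type*} [Fintype κ] {χ : κ → Dual ℝ E} {e : κ → ℝ}
    (hfeas : ∃ A, (∀ t, φ t A ≤ d t) ∧ ∀ u, χ u A = e u)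
    (hbdd : ∀ A, (∀ t, φ t A ≤ d t) → (∀ u, χ u A = e u) → ψ A ≤ β) :
    ∃ (l : ι → ℝ) (ν : κ → ℝ), 0 ≤ l ∧ ψ = ∑ t, l t • φ t + ∑ u, ν u • χ u ∧
      ∑ t, l t * d t + ∑ u, ν u * e u ≤ β := by
  have hiff : ∀ A, (∀ o, Sum.elim φ (Sum.elim χ (-χ)) o A ≤ Sum.elim d (Sum.elim e (-e)) o) ↔
      (∀ t, φ t A ≤ d t) ∧ ∀ u, χ u A = e u := fun A => by
    simp only [Sum.forall, Sum.elim_inl, Sum.elim_inr, Pi.neg_apply, LinearMap.neg_apply,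
      neg_le_neg_iff, ← forall_and, le_antisymm_iff]
  obtain ⟨l, hl, hψ, hβ⟩ := affine_farkas (hfeas.imp fun A hA => (hiff A).mpr hA)
    fun A hA => hbdd A ((hiff A).mp hA).1 ((hiff A).mp hA).2
  refine ⟨fun t => l (.inl t), fun u => l (.inr (.inl u)) - l (.inr (.inr u)),
    fun t => hl _, ?_, ?_⟩
  · simp [hψ, Fintype.sum_sum_type, sub_eq_add_neg, add_smul, Finset.sum_add_distrib]
  · simp only [Fintype.sum_sum_type, Sum.elim_inl, Sum.elim_inr, Pi.neg_apply] at hβ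
    simp only [sub_mul, Finset.sum_sub_distrib, mul_neg, Finset.sum_neg_distrib] at hβ ⊢
    linarith

end Module.Dual

namespace Matrix

variable {n R : Type*} [Fintype n]

theorem trace_vecMulVec_mul [CommSemiring R] (a b : n → R) (A : Matrix n n R) :
    trace (vecMulVec a b * A) = b ⬝ᵥ (A *ᵥ a) := by
  rw [vecMulVec_mul, trace_vecMulVec, dotProduct_comm, dotProduct_mulVec]

def traceMulLeft [CommSemiring R] (W : Matrix n n R) : Module.Dual R (Matrix n n R) :=
  traceLinearMap n R R ∘ₗ LinearMap.mulLeft R W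

@[simp]
theorem traceMulLeft_apply [CommSemiring R] (W A : Matrix n n R) :
    traceMulLeft W A = trace (W * A) := rfl

variable {ι κ : Type*} [Fintype ι] [Fintype κ]

theorem trace_sum_vecMulVec_add_sum_smul_mul [CommSemiring R] (x η : κ → n → R) (μ : ι → R)
    (W : ι → Matrix n n R) (A : Matrix n n R) :
    trace ((∑ k, vecMulVec (x k) (η k) + ∑ j, μ j • W j) * A) =
      ∑ k, η k ⬝ᵥ (A *ᵥ x k) + ∑ j, μ j * trace (W j * A) := by
  simp only [add_mul, Finset.sum_mul, trace_add, trace_sum, smul_mul_assoc, trace_smul,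
    trace_vecMulVec_mul, smul_eq_mul]

theorem dotProduct_mulVec_le_of_certificate [CommRing R] [PartialOrder R] [IsOrderedRing R]
    {V : ι → Matrix n n R} {v : ι → R} {x y : κ → n → R} {z g : n → R} {β : R}
    {A : Matrix n n R} (hAV : ∀ j, trace ((V j)ᵀ * A) ≤ v j) (hAx : ∀ k, A *ᵥ x k = y k)
    {μ : ι → R} {η : κ → n → R} (hμ : 0 ≤ μ) (hβ : ∑ k, y k ⬝ᵥ η k + ∑ j, μ j * v j ≤ β)
    (hcert : vecMulVec z g = ∑ k, vecMulVec (x k) (η k) + ∑ j, μ j • (V j)ᵀ) :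
    g ⬝ᵥ (A *ᵥ z) ≤ β :=
  calc g ⬝ᵥ (A *ᵥ z) = ∑ k, y k ⬝ᵥ η k + ∑ j, μ j * trace ((V j)ᵀ * A) := by
        simp only [← trace_vecMulVec_mul, hcert, trace_sum_vecMulVec_add_sum_smul_mul, hAx,
          dotProduct_comm]
    _ ≤ ∑ k, y k ⬝ᵥ η k + ∑ j, μ j * v j := by
        gcongr with j
        exacts [hμ j, hAV j]
    _ ≤ β := hβ

theorem exists_certificate_of_forall_dotProduct_mulVec_le {V : ι → Matrix n n ℝ} {v : ι → ℝ}
    {x y : κ → n → ℝ} {z g : n → ℝ} {β : ℝ}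
    (hfeas : ∃ A : Matrix n n ℝ, (∀ j, trace ((V j)ᵀ * A) ≤ v j) ∧ ∀ k, A *ᵥ x k = y k)
    (hbdd : ∀ A : Matrix n n ℝ, (∀ j, trace ((V j)ᵀ * A) ≤ v j) → (∀ k, A *ᵥ x k = y k) →
      g ⬝ᵥ (A *ᵥ z) ≤ β) :
    ∃ (μ : ι → ℝ) (η : κ → n → ℝ), 0 ≤ μ ∧ ∑ k, y k ⬝ᵥ η k + ∑ j, μ j * v j ≤ β ∧
      vecMulVec z g = ∑ k, vecMulVec (x k) (η k) + ∑ j, μ j • (V j)ᵀ := by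
  classical
  let χ : κ × n → Module.Dual ℝ (Matrix n n ℝ) :=
    fun kp => traceMulLeft (vecMulVec (x kp.1) (Pi.single kp.2 1))
  have hχ : ∀ A kp, χ kp A = (A *ᵥ x kp.1) kp.2 := by
    simp [χ, trace_vecMulVec_mul]
  have hx_iff : ∀ A : Matrix n n ℝ, (∀ k, A *ᵥ x k = y k) ↔ ∀ kp, χ kp A = y kp.1 kp.2 := by
    simp [hχ, funext_iff]
  obtain ⟨μ, ν, hμ, hψ, hβ⟩ := Module.Dual.affine_farkas_of_eq
    (φ := fun j => traceMulLeft (V j)ᵀ) (d := v) (χ := χ) (e := fun kp => y kp.1 kp.2)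
    (ψ := traceMulLeft (vecMulVec z g)) (β := β)
    (by simpa only [traceMulLeft_apply, hx_iff] using hfeas)
    (fun A hAV hAx => by
      simpa [trace_vecMulVec_mul] using hbdd A hAV ((hx_iff A).mpr hAx))
  have hν : ∀ w : κ → n → ℝ, ∑ kp, ν kp * w kp.1 kp.2 = ∑ k, w k ⬝ᵥ fun p => ν (k, p) := by
    simp [Fintype.sum_prod_type, dotProduct, mul_comm]
  refine ⟨μ, fun k p => ν (k, p), hμ, by simpa [hν, add_comm] using hβ, ?_⟩
  refine ext_iff_trace_mul_right.mpr fun A => ?_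
  rw [trace_sum_vecMulVec_add_sum_smul_mul, ← traceMulLeft_apply, hψ]
  simp [hχ, hν fun k => A *ᵥ x k, dotProduct_comm, add_comm]

end Matrix

theorem stmt_0_general (n r s m : ℕ)
    (h : Fin r → Fin n → ℝ) (b : Fin r → ℝ)
    (V : Fin s → Matrix (Fin n) (Fin n) ℝ) (v : Fin s → ℝ)
    (x : Fin m → Fin n → ℝ) (y : Fin m → Fin n → ℝ)
    (S : Set (Fin n → ℝ)) (hS : S = {z | ∀ i, h i ⬝ᵥ z ≤ b i})
    (U0 : Set (Matrix (Fin n) (Fin n) ℝ))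
    (hU0 : U0 = {A | ∀ j, ((V j)ᵀ * A).trace ≤ v j})
    (Um : Set (Matrix (Fin n) (Fin n) ℝ))
    (hUm : Um = {A ∈ U0 | ∀ k, A *ᵥ x k = y k})
    (hne : Um.Nonempty) :
    ∀ z : Fin n → ℝ,
      (z ∈ S ∧ ∀ A ∈ Um, A *ᵥ z ∈ S) ↔
      ∃ (μ : Fin r → Fin s → ℝ) (η : Fin r → Fin m → Fin n → ℝ),
        ∀ i : Fin r,
          (∀ j, 0 ≤ μ i j) ∧
          h i ⬝ᵥ z ≤ b i ∧
          (∑ k, y k ⬝ᵥ η i k) + (∑ j, μ i j * v j) ≤ b i ∧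
          vecMulVec z (h i) = (∑ k, vecMulVec (x k) (η i k)) + ∑ j, μ i j • (V j)ᵀ := by
  subst hS hUm hU0
  intro z
  constructor
  · rintro ⟨hz, hAz⟩
    choose μ η hμ hβ hcert using fun i => exists_certificate_of_forall_dotProduct_mulVec_le
      (z := z) (g := h i) (β := b i) hne fun A hAV hAx => hAz A ⟨hAV, hAx⟩ i
    exact ⟨μ, η, fun i => ⟨hμ i, hz i, hβ i, hcert i⟩⟩
  · rintro ⟨μ, η, hcert⟩
    refine ⟨fun i => (hcert i).2.1, fun A ⟨hAV, hAx⟩ i => ?_⟩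
    obtain ⟨hμ, -, hβ, hmat⟩ := hcert i
    exact dotProduct_mulVec_le_of_certificate hAV hAx hμ hβ hmat

/-- LP-duality characterization of the one-step safe set for linear dynamics with a
polyhedral safety region `S` and polyhedral uncertainty set `U₀`, after `m`
measurements `(x k, y k)`. -/
theorem stmt_0 (n r s m : ℕ) (hn : 0 < n) (hr : 0 < r) (hs : 0 < s) (hm : 0 < m)
    (h : Fin r → Fin n → ℝ) (b : Fin r → ℝ)
    (V : Fin s → Matrix (Fin n) (Fin n) ℝ) (v : Fin s → ℝ)
    (x : Fin m → Fin n → ℝ) (y : Fin m → Fin n → ℝ)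
    (S : Set (Fin n → ℝ)) (hS : S = {z | ∀ i, h i ⬝ᵥ z ≤ b i})
    (U0 : Set (Matrix (Fin n) (Fin n) ℝ))
    (hU0 : U0 = {A | ∀ j, ((V j)ᵀ * A).trace ≤ v j})
    (Um : Set (Matrix (Fin n) (Fin n) ℝ))
    (hUm : Um = {A ∈ U0 | ∀ k, A *ᵥ x k = y k})
    (hne : Um.Nonempty) :
    ∀ z : Fin n → ℝ,
      (z ∈ S ∧ ∀ A ∈ Um, A *ᵥ z ∈ S) ↔
      ∃ (μ : Fin r → Fin s → ℝ) (η : Fin r → Fin m → Fin n → ℝ),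
        ∀ i : Fin r,
          (∀ j, 0 ≤ μ i j) ∧
          h i ⬝ᵥ z ≤ b i ∧
          (∑ k, y k ⬝ᵥ η i k) + (∑ j, μ i j * v j) ≤ b i ∧
          vecMulVec z (h i) = (∑ k, vecMulVec (x k) (η i k)) + ∑ j, μ i j • (V j)ᵀ :=
  stmt_0_general n r s m h b V v x y S hS U0 hU0 Um hUm hne
end

section
/- Let S ⊆ ℝ^n, U_0 ⊆ ℝ^{n×n} and A_⋆ ∈ U_0. For a finite sequence z_1,…,z_k ∈ ℝ^n define U(z_1,…,z_k) = {A ∈ U_0 : A z_j = A_⋆ z_j, j = 1,…,k} and S¹(z_1,…,z_k) = {x ∈ S : A x ∈ S for all A ∈ U(z_1,…,z_k)} (for k = 0 these are U_0 and S¹_0 = {x ∈ S : A x ∈ S, ∀A ∈ U_0}). Suppose x_1,…,x_m ∈ ℝ^n are such that S¹(x_1,…,x_m) is contained in the linear span of {x_1,…,x_m}. Then for every nonnegative integer m̃ and every sequence x̃_1,…,x̃_{m̃} ∈ ℝ^n satisfying the safety condition x̃_{k+1} ∈ S¹(x̃_1,…,x̃_k) for every k = 0,…,m̃−1, one has U(x_1,…,x_m)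 ⊆ U(x̃_1,…,x̃_{m̃}). In particular, if U(x_1,…,x_m) is not a singleton, then no safety-respecting sequence of initialization points can reduce the uncertainty set to a singleton. -/
open Matrix

/-- If the current one-step safe set `S¹(x₁,…,x_m)` is contained in the span of the
queried points `x₁,…,x_m`, then any safety-respecting sequence of initialization
points `x̃₁,…,x̃_m̃` cannot reduce the uncertainty set below `U(x₁,…,x_m)`; in
particular if the latter is not the singleton `{A⋆}`, no safety-respecting sequence
can pin down `A⋆`. -/
theorem stmt_1 (n : ℕ) (S : Set (Fin n → ℝ)) (U0 : Set (Matrix (Fin n) (Fin n) ℝ))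
    (Astar : Matrix (Fin n) (Fin n) ℝ) (hAstar : Astar ∈ U0)
    (m : ℕ) (x : ℕ → Fin n → ℝ)
    (hspan : {w | w ∈ S ∧ ∀ A ∈ U0,
        (∀ j < m, A *ᵥ x j = Astar *ᵥ x j) → A *ᵥ w ∈ S} ⊆
        (Submodule.span ℝ (x '' Set.Iio m) : Set (Fin n → ℝ)))
    (mt : ℕ) (xt : ℕ → Fin n → ℝ)
    (hsafe : ∀ k < mt, xt k ∈ S ∧ ∀ A ∈ U0,
        (∀ j < k, A *ᵥ xt j = Astar *ᵥ xt j) → A *ᵥ xt k ∈ S) :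
    ({A ∈ U0 | ∀ j < m, A *ᵥ x j = Astar *ᵥ x j} ⊆
      {A ∈ U0 | ∀ j < mt, A *ᵥ xt j = Astar *ᵥ xt j}) ∧
    ({A ∈ U0 | ∀ j < m, A *ᵥ x j = Astar *ᵥ x j} ≠ {Astar} →
      {A ∈ U0 | ∀ j < mt, A *ᵥ xt j = Astar *ᵥ xt j} ≠ {Astar}) := by
  have key : ∀ j, j < mt → ∀ A ∈ U0, (∀ i < m, A *ᵥ x i = Astar *ᵥ x i) →
      A *ᵥ xt j = Astar *ᵥ xt j := by
    intro j
    induction j using Nat.strong_induction_on with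
    | _ j ih =>
      intro hj A hA hAx
      have hmem : xt j ∈ (Submodule.span ℝ (x '' Set.Iio m) : Set (Fin n → ℝ)) := by
        apply hspan
        refine ⟨(hsafe j hj).1, fun B hB hBx => (hsafe j hj).2 B hB fun i hi =>
          ih i hi (hi.trans hj) B hB hBx⟩
      have hle : Submodule.span ℝ (x '' Set.Iio m) ≤
          LinearMap.ker (A.mulVecLin - Astar.mulVecLin) := by
        rw [Submodule.span_le]
        rintro v ⟨i, hi, rfl⟩
        simp [LinearMap.mem_ker, sub_eq_zero, hAx i hi]
      have := hle hmem
      simpa [LinearMap.mem_ker, sub_eq_zero] using this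
  have hsub : {A ∈ U0 | ∀ j < m, A *ᵥ x j = Astar *ᵥ x j} ⊆
      {A ∈ U0 | ∀ j < mt, A *ᵥ xt j = Astar *ᵥ xt j} := by
    rintro A ⟨hA, hAx⟩
    exact ⟨hA, fun j hj => key j hj A hA hAx⟩
  refine ⟨hsub, fun hne heq => hne ?_⟩
  apply Set.Subset.antisymm
  · rw [← heq]; exact hsub
  · rintro A rfl; exact ⟨hAstar, fun j hj => rfl⟩
end

section
/- Let S = {x ∈ ℝ^n : h_i^T x ≤ b_i, i = 1,…,r} and U_0 = {A ∈ ℝ^{n×n} : Tr(V_j^T A) ≤ v_j, j = 1,…,s} be polyhedra, and let A_⋆ ∈ U_0. For a finite sequence z_1,…,z_k ∈ ℝ^n define U(z_1,…,z_k) = {A ∈ U_0 : A z_j = A_⋆ z_j, j = 1,…,k} and S¹(z_1,…,z_k) = {x ∈ S : A x ∈ S for all A ∈ U(z_1,…,z_k)}. If there exist a nonnegative integer m and vectors x_1,…,x_m ∈ ℝ^n such that x_k ∈ S¹(x_1,…,x_{k−1}) for every k = 1,…,m and U(x_1,…,x_m) = {A_⋆}, then there exist m' ≤ n and vectors x'_1,…,x'_{m'}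 ∈ ℝ^n such that x'_k ∈ S¹(x'_1,…,x'_{k−1}) for every k = 1,…,m' and U(x'_1,…,x'_{m'}) = {A_⋆}. -/
/-!
A matrix agrees with `Astar` on a set of vectors iff it agrees with it on their span, so the
safety and learning conditions only see, for each `k`, the span of the first `k` measurements.
A measurement lying in the span of its predecessors can therefore be deleted without changing
any of the remaining conditions. Deleting such measurements as long as there are any leaves a
linearly independent sequence, of length at most `n`.
-/

open Matrix Set Submodule Module

/-- As `Fin.succAbove`: `x ∘ k.succAbove` is the sequence `x` with its `k`-th entry deleted. -/
def Nat.succAbove (k j : ℕ) : ℕ := if j < k then j else j + 1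

theorem Nat.exists_succAbove_eq {k i : ℕ} (h : i ≠ k) : ∃ i', k.succAbove i' = i := by
  refine ⟨if i < k then i else i - 1, ?_⟩
  unfold Nat.succAbove; split_ifs <;> omega

theorem Nat.succAbove_lt_succAbove_iff {k i j : ℕ} : k.succAbove i < k.succAbove j ↔ i < j := by
  unfold Nat.succAbove; split_ifs <;> omega

section Dependence

variable {K M : Type*} [DivisionRing K] [AddCommGroup M] [Module K M]

theorem linearIndepOn_Iio_of_forall_notMem_span {x : ℕ → M} {m : ℕ}
    (hx : ∀ k < m, x k ∉ span K (x '' Iio k)) : LinearIndepOn K x (Iio m) := by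
  induction m with
  | zero => simp
  | succ m ih =>
    rw [Iio_add_one_eq_Iic, ← Iio_insert]
    exact (ih fun k hk => hx k (by omega)).insert (hx m m.lt_add_one)

theorem exists_mem_span_image_Iio [FiniteDimensional K M] (x : ℕ → M) {m : ℕ}
    (hm : finrank K M < m) : ∃ k < m, x k ∈ span K (x '' Iio k) := by
  by_contra! hx
  have hcard := (linearIndepOn_Iio_of_forall_notMem_span hx).fintype_card_le_finrank
  exact hm.not_ge (by simpa using hcard)

end Dependence

theorem span_image_Iio_comp_succAbove {R M : Type*} [Semiring R] [AddCommMonoid M] [Module R M]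
    {x : ℕ → M} {k : ℕ} (hk : x k ∈ span R (x '' Iio k)) (j : ℕ) :
    span R ((x ∘ k.succAbove) '' Iio j) = span R (x '' Iio (k.succAbove j)) := by
  apply le_antisymm
  · refine span_le.2 ?_
    rintro _ ⟨i, hi, rfl⟩
    exact subset_span ⟨k.succAbove i, Nat.succAbove_lt_succAbove_iff.2 hi, rfl⟩
  · refine span_le.2 ?_
    rintro _ ⟨i, hi, rfl⟩
    obtain rfl | hik := eq_or_ne i k
    · have hij : i ≤ j := by
        rw [mem_Iio, Nat.succAbove] at hi
        split_ifs at hi <;> omega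
      refine span_le.2 ?_ hk
      rintro _ ⟨i', hi', rfl⟩
      refine subset_span ⟨i', lt_of_lt_of_le hi' hij, ?_⟩
      simp [Nat.succAbove, show i' < i from hi']
    · obtain ⟨i', rfl⟩ := Nat.exists_succAbove_eq hik
      exact subset_span ⟨i', Nat.succAbove_lt_succAbove_iff.1 hi, rfl⟩

section SafeLearning

variable {R ι : Type*} [CommRing R] [Fintype ι]

theorem forall_lt_mulVec_eq_iff_of_span_eq {κ : Type*} {A B : Matrix κ ι R} {x y : ℕ → ι → R}
    {k l : ℕ} (h : span R (x '' Iio k) = span R (y '' Iio l)) :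
    (∀ j < k, A *ᵥ x j = B *ᵥ x j) ↔ ∀ j < l, A *ᵥ y j = B *ᵥ y j := by
  have eqOn_iff (z : ℕ → ι → R) (t : ℕ) : (∀ j < t, A *ᵥ z j = B *ᵥ z j) ↔
      EqOn A.mulVecLin B.mulVecLin (span R (z '' Iio t)) := by
    rw [LinearMap.eqOn_span_iff]
    simp [EqOn]
  rw [eqOn_iff, eqOn_iff, h]

variable (S : Set (ι → R)) (U0 : Set (Matrix ι ι R)) (Astar : Matrix ι ι R)

def consistentSet (x : ℕ → ι → R) (m : ℕ) : Set (Matrix ι ι R) :=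
  {A ∈ U0 | ∀ j < m, A *ᵥ x j = Astar *ᵥ x j}

def IsOneStepSafe (x : ℕ → ι → R) (m : ℕ) : Prop :=
  ∀ k < m, x k ∈ S ∧ ∀ A ∈ U0, (∀ j < k, A *ᵥ x j = Astar *ᵥ x j) → A *ᵥ x k ∈ S

variable {S U0 Astar}

theorem consistentSet_eq_of_span_eq {x y : ℕ → ι → R} {m m' : ℕ}
    (h : span R (x '' Iio m) = span R (y '' Iio m')) :
    consistentSet U0 Astar x m = consistentSet U0 Astar y m' := by
  unfold consistentSet
  simp_rw [forall_lt_mulVec_eq_iff_of_span_eq h]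

theorem IsOneStepSafe.of_span_eq {x y : ℕ → ι → R} {m m' : ℕ} (hx : IsOneStepSafe S U0 Astar x m)
    (h : ∀ j < m', ∃ i < m, y j = x i ∧ span R (y '' Iio j) = span R (x '' Iio i)) :
    IsOneStepSafe S U0 Astar y m' := by
  intro j hj
  obtain ⟨i, hi, hyx, hspan⟩ := h j hj
  obtain ⟨hxS, hxsafe⟩ := hx i hi
  refine ⟨hyx ▸ hxS, fun A hA hagree => hyx ▸ hxsafe A hA ?_⟩
  exact (forall_lt_mulVec_eq_iff_of_span_eq hspan).1 hagree

theorem IsOneStepSafe.comp_succAbove {x : ℕ → ι → R} {m k : ℕ}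
    (hx : IsOneStepSafe S U0 Astar x (m + 1)) (hk : x k ∈ span R (x '' Iio k)) :
    IsOneStepSafe S U0 Astar (x ∘ k.succAbove) m :=
  hx.of_span_eq fun j hj => ⟨k.succAbove j, by unfold Nat.succAbove; split_ifs <;> omega, rfl,
    span_image_Iio_comp_succAbove hk j⟩

theorem consistentSet_comp_succAbove {x : ℕ → ι → R} {m k : ℕ} (hkm : k ≤ m)
    (hk : x k ∈ span R (x '' Iio k)) :
    consistentSet U0 Astar (x ∘ k.succAbove) m = consistentSet U0 Astar x (m + 1) := by
  refine consistentSet_eq_of_span_eq ?_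
  rw [span_image_Iio_comp_succAbove hk, Nat.succAbove, if_neg (not_lt.2 hkm)]

end SafeLearning

theorem exists_isOneStepSafe_le_card {R ι : Type*} [Field R] [Fintype ι] {S : Set (ι → R)}
    {U0 : Set (Matrix ι ι R)} {Astar : Matrix ι ι R} {x : ℕ → ι → R} {m : ℕ}
    (hx : IsOneStepSafe S U0 Astar x m) :
    ∃ (m' : ℕ) (x' : ℕ → ι → R), m' ≤ Fintype.card ι ∧ IsOneStepSafe S U0 Astar x' m' ∧
      consistentSet U0 Astar x' m' = consistentSet U0 Astar x m := by
  induction m generalizing x with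
  | zero => exact ⟨0, x, Nat.zero_le _, hx, rfl⟩
  | succ m ih =>
    by_cases hm : m + 1 ≤ Fintype.card ι
    · exact ⟨m + 1, x, hm, hx, rfl⟩
    obtain ⟨k, hk, hxk⟩ := exists_mem_span_image_Iio (K := R) x
      (m := m + 1) (by rw [finrank_fintype_fun_eq_card]; omega)
    obtain ⟨m', x', hm', hx', hcons⟩ := ih (hx.comp_succAbove hxk)
    exact ⟨m', x', hm', hx', hcons.trans (consistentSet_comp_succAbove (by omega) hxk)⟩

theorem stmt_2_general (n : ℕ)
    (S : Set (Fin n → ℝ))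
    (U0 : Set (Matrix (Fin n) (Fin n) ℝ))
    (Astar : Matrix (Fin n) (Fin n) ℝ)
    (m : ℕ) (x : ℕ → Fin n → ℝ)
    (hsafe : ∀ k < m, x k ∈ S ∧ ∀ A ∈ U0,
        (∀ j < k, A *ᵥ x j = Astar *ᵥ x j) → A *ᵥ x k ∈ S)
    (hlearn : {A ∈ U0 | ∀ j < m, A *ᵥ x j = Astar *ᵥ x j} = {Astar}) :
    ∃ (m' : ℕ) (x' : ℕ → Fin n → ℝ), m' ≤ n ∧
      (∀ k < m', x' k ∈ S ∧ ∀ A ∈ U0,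
        (∀ j < k, A *ᵥ x' j = Astar *ᵥ x' j) → A *ᵥ x' k ∈ S) ∧
      {A ∈ U0 | ∀ j < m', A *ᵥ x' j = Astar *ᵥ x' j} = {Astar} := by
  obtain ⟨m', x', hm', hsafe', hcons⟩ := exists_isOneStepSafe_le_card hsafe
  exact ⟨m', x', Fintype.card_fin n ▸ hm', hsafe', hcons.trans hlearn⟩

/-- If one-step safe learning of `A⋆` is possible with some number of measurements,
then it is possible with at most `n` measurements. -/
theorem stmt_2 (n r s : ℕ)
    (h : Fin r → Fin n → ℝ) (b : Fin r → ℝ)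
    (V : Fin s → Matrix (Fin n) (Fin n) ℝ) (v : Fin s → ℝ)
    (S : Set (Fin n → ℝ)) (hS : S = {z | ∀ i, h i ⬝ᵥ z ≤ b i})
    (U0 : Set (Matrix (Fin n) (Fin n) ℝ))
    (hU0 : U0 = {A | ∀ j, ((V j)ᵀ * A).trace ≤ v j})
    (Astar : Matrix (Fin n) (Fin n) ℝ) (hAstar : Astar ∈ U0)
    (m : ℕ) (x : ℕ → Fin n → ℝ)
    (hsafe : ∀ k < m, x k ∈ S ∧ ∀ A ∈ U0,
        (∀ j < k, A *ᵥ x j = Astar *ᵥ x j) → A *ᵥ x k ∈ S)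
    (hlearn : {A ∈ U0 | ∀ j < m, A *ᵥ x j = Astar *ᵥ x j} = {Astar}) :
    ∃ (m' : ℕ) (x' : ℕ → Fin n → ℝ), m' ≤ n ∧
      (∀ k < m', x' k ∈ S ∧ ∀ A ∈ U0,
        (∀ j < k, A *ᵥ x' j = Astar *ᵥ x' j) → A *ᵥ x' k ∈ S) ∧
      {A ∈ U0 | ∀ j < m', A *ᵥ x' j = Astar *ᵥ x' j} = {Astar} :=
  stmt_2_general n S U0 Astar m x hsafe hlearn
end

section
/- Let n be a positive integer and m = ⌈n/2⌉. For A ∈ ℝ^{n×n} and X ∈ ℝ^{n×m}, let Z(A,X) ∈ ℝ^{n×n} denote the matrix formed by the first n columns of the n×2m matrix [X, AX] (i.e., the columns of X followed by the columns of AX, truncated to n columns). Then the set {(A,X) ∈ ℝ^{n×n} × ℝ^{n×m} : det Z(A,X) = 0} has Lebesgue measure zero in ℝ^{n×(n+m)}. -/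
/-!
The entries of `Z(A, X)` are polynomials in the entries of `A` and `X`, so `det Z` is a real
polynomial in `n² + nm` variables. It is not the zero polynomial: for `X₀ = [I_m; 0]` and `A₀` the
shift `e_k ↦ e_{k+m}`, the columns of `[X₀, A₀X₀]` are `e₀, e₁, …`, so `Z(A₀, X₀) = 1`. The zero
set of a nonzero real polynomial is Lebesgue-null, by induction on the number of variables and
Fubini: for almost every value of the other variables the leading coefficient in the first one
does not vanish, leaving finitely many roots.
-/

open Matrix MeasureTheory

theorem MeasureTheory.Measure.addHaar_eq_zero_of_preimage_linearEquiv {E F : Type*}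
    [NormedAddCommGroup E] [NormedSpace ℝ E] [MeasurableSpace E] [BorelSpace E]
    [FiniteDimensional ℝ E]
    [NormedAddCommGroup F] [NormedSpace ℝ F] [MeasurableSpace F] [BorelSpace F]
    [FiniteDimensional ℝ F]
    (μ : Measure E) (ν : Measure F) [μ.IsAddHaarMeasure] [ν.IsAddHaarMeasure]
    (e : E ≃ₗ[ℝ] F) {s : Set F} (hs : μ (e ⁻¹' s) = 0) : ν s = 0 := by
  let e' : E ≃ᵐ F := e.toContinuousLinearEquiv.toHomeomorph.toMeasurableEquiv
  have : (μ.map e').IsAddHaarMeasure := Measure.MapLinearEquiv.isAddHaarMeasure μ e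
  rw [ν.isAddLeftInvariant_eq_smul (μ.map e'), Measure.smul_apply, e'.map_apply]
  simp [e', hs]

namespace MvPolynomial

theorem volume_zeroSet_eq_zero_fin {k : ℕ} (p : MvPolynomial (Fin k) ℝ) (hp : p ≠ 0) :
    volume {x | eval x p = 0} = 0 := by
  induction k with
  | zero =>
    obtain ⟨c, rfl⟩ := C_surjective (Fin 0) p
    simp_all
  | succ k ih =>
    set q := finSuccEquiv ℝ k p
    have hq : q.leadingCoeff ≠ 0 := by simpa [q] using hp
    have hslice : ∀ᵐ s : Fin k → ℝ, volume {y | eval (Fin.cons y s) p = 0} = 0 := by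
      filter_upwards [measure_eq_zero_iff_ae_notMem.1 (ih _ hq)] with s hs
      have hqs : q.map (eval s) ≠ 0 := fun h => hs <| by
        simpa using congrArg (Polynomial.coeff · q.natDegree) h
      simp only [eval_eq_eval_mv_eval']
      exact (Polynomial.finite_setOfPred_isRoot hqs).measure_zero _
    have hmeas : MeasurableSet {z : ℝ × (Fin k → ℝ) | eval (Fin.cons z.1 z.2) p = 0} :=
      measurableSet_eq_fun ((continuous_eval p).comp (by fun_prop)).measurable measurable_const
    calc volume {x | eval x p = 0}
        = (volume.prod volume) {z : ℝ × (Fin k → ℝ) | eval (Fin.cons z.1 z.2) p = 0} := by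
          rw [← (volume_preserving_piFinSuccAbove (fun _ => ℝ) 0).symm.measure_preimage_equiv]
          simp only [MeasurableEquiv.piFinSuccAbove_symm_apply, Fin.insertNthEquiv_zero]
          rfl
      _ = ∫⁻ s, volume {y | eval (Fin.cons y s) p = 0} := Measure.prod_apply_symm hmeas
      _ = 0 := by rw [lintegral_congr_ae hslice, lintegral_zero]

theorem volume_zeroSet_eq_zero {ι : Type*} [Fintype ι] (p : MvPolynomial ι ℝ) (hp : p ≠ 0) :
    volume {x | eval x p = 0} = 0 := by
  let e := Fintype.equivFin ι
  refine Measure.addHaar_eq_zero_of_preimage_linearEquiv volume volume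
    (LinearEquiv.funCongrLeft ℝ ℝ e) ?_
  convert volume_zeroSet_eq_zero_fin (rename e p) ((rename_injective e e.injective).ne hp)
    using 2
  ext x
  simp only [Set.mem_preimage, Set.mem_ofPred_eq, eval_rename]
  rfl

end MvPolynomial

namespace Matrix

variable {R : Type*} {n m : ℕ}

def truncAppendMul [Mul R] [AddCommMonoid R] (h : n ≤ 2 * m)
    (A : Matrix (Fin n) (Fin n) R) (X : Matrix (Fin n) (Fin m) R) : Matrix (Fin n) (Fin n) R :=
  of fun i j => if hj : (j : ℕ) < m then X i ⟨j, hj⟩ else (A * X) i ⟨j - m, by omega⟩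

theorem map_truncAppendMul {S : Type*} [NonAssocSemiring R] [NonAssocSemiring S] (f : R →+* S)
    (h : n ≤ 2 * m) (A : Matrix (Fin n) (Fin n) R) (X : Matrix (Fin n) (Fin m) R) :
    (truncAppendMul h A X).map f = truncAppendMul h (A.map f) (X.map f) := by
  ext i j
  by_cases hj : (j : ℕ) < m
  · simp [truncAppendMul, hj]
  · simp [truncAppendMul, hj, ← Matrix.map_mul]

theorem truncAppendMul_shift_eq_one [NonAssocSemiring R] (h : n ≤ 2 * m) :
    truncAppendMul h (of fun i k : Fin n => if (i : ℕ) = k + m then (1 : R) else 0)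
      (of fun i j => if (i : ℕ) = j then 1 else 0) = 1 := by
  ext i j
  by_cases hj : (j : ℕ) < m
  · simp [truncAppendMul, hj, one_apply, Fin.ext_iff]
  · simp only [truncAppendMul, of_apply, hj, dite_false, mul_apply]
    rw [Finset.sum_eq_single ⟨j - m, by omega⟩ (fun k _ hk => by simp [Fin.ext_iff] at hk ⊢; omega)
      (by simp)]
    simp [one_apply, Fin.ext_iff, Nat.sub_add_cancel (not_lt.1 hj)]

theorem map_eval_of_X {σ ι κ : Type*} [CommSemiring R] (f : ι → κ → σ) (x : σ → R) :
    (of fun i j => (MvPolynomial.X (f i j) : MvPolynomial σ R)).map (MvPolynomial.eval x) =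
      of fun i j => x (f i j) := by
  ext; simp

open MvPolynomial in
theorem det_truncAppendMul_X_ne_zero [CommRing R] [Nontrivial R] (h : n ≤ 2 * m) :
    (truncAppendMul h
      (of fun i k => (X (.inl (i, k)) : MvPolynomial (Fin n × Fin n ⊕ Fin n × Fin m) R))
      (of fun i j => X (.inr (i, j)))).det ≠ 0 := by
  intro h0
  let x₀ : Fin n × Fin n ⊕ Fin n × Fin m → R :=
    Sum.elim (fun q => if (q.1 : ℕ) = q.2 + m then 1 else 0)
      (fun q => if (q.1 : ℕ) = q.2 then 1 else 0)
  have hx₀ : truncAppendMul h (of fun i k => x₀ (.inl (i, k)))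
      (of fun i j => x₀ (.inr (i, j))) = 1 :=
    truncAppendMul_shift_eq_one h
  have := congrArg (eval x₀) h0
  rw [RingHom.map_det, RingHom.mapMatrix_apply, map_truncAppendMul, map_eval_of_X, map_eval_of_X,
    hx₀, det_one, map_zero] at this
  exact one_ne_zero this

end Matrix

/-- With `m = ⌈n/2⌉`, the set of pairs `(A, X)` for which the matrix formed by the
first `n` columns of `[X, AX]` is singular has Lebesgue measure zero. -/
theorem stmt_4 (n m : ℕ) (hm : m = (n + 1) / 2) :
    volume {p : (Fin n → Fin n → ℝ) × (Fin n → Fin m → ℝ) |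
      (Matrix.of fun i j : Fin n =>
        if hj : (j : ℕ) < m then Matrix.of p.2 i ⟨(j : ℕ), hj⟩
        else (Matrix.of p.1 * Matrix.of p.2) i ⟨(j : ℕ) - m, by omega⟩).det = 0} = 0 := by
  have h : n ≤ 2 * m := by omega
  have hpi (k l : ℕ) : (volume : Measure (Fin k → Fin l → ℝ)).IsAddHaarMeasure :=
    Measure.pi.isAddHaarMeasure _
  have hprod := Measure.prod.instIsAddHaarMeasure
    (volume : Measure (Fin n → Fin n → ℝ)) (volume : Measure (Fin n → Fin m → ℝ))
  let e : (Fin n × Fin n ⊕ Fin n × Fin m → ℝ) ≃ₗ[ℝ] (Fin n → Fin n → ℝ) × (Fin n → Fin m → ℝ) :=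
    (LinearEquiv.sumArrowLequivProdArrow _ _ ℝ ℝ).trans
      ((LinearEquiv.curry ℝ ℝ _ _).prodCongr (LinearEquiv.curry ℝ ℝ _ _))
  refine Measure.addHaar_eq_zero_of_preimage_linearEquiv volume volume e ?_
  convert MvPolynomial.volume_zeroSet_eq_zero _ (Matrix.det_truncAppendMul_X_ne_zero (R := ℝ) h)
    using 2
  ext x
  rw [Set.mem_preimage, Set.mem_ofPred_eq, Set.mem_ofPred_eq, RingHom.map_det,
    RingHom.mapMatrix_apply, Matrix.map_truncAppendMul, Matrix.map_eval_of_X, Matrix.map_eval_of_X]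
  exact Iff.rfl
end

section
/- Let A_⋆ ∈ ℝ^{n×n}. For any vector x ∈ ℝ^n and any integer k ≥ n, the set {A ∈ ℝ^{n×n} : A^i x = A_⋆^i x for i = 1,…,k} equals the set {A ∈ ℝ^{n×n} : A^i x = A_⋆^i x for i = 1,…,n}. -/
/-!
If `A` and `B` agree on the vectors `x, A x, …, Aⁿ x`, then `p(A) x = p(B) x` for every polynomial
of degree at most `n`, in particular for the characteristic polynomial `χ` of `A`, so that
`χ(B) x = χ(A) x = 0` by Cayley–Hamilton. Dividing `Xᵐ` by `χ` with remainder `r`, of degree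
`< n`, then gives `Bᵐ x = r(B) x = r(A) x = Aᵐ x`.
-/

open Matrix Polynomial

namespace Matrix

variable {R ι : Type*} [CommRing R] [Fintype ι] [DecidableEq ι]

theorem aeval_mulVec_eq_of_pow_mulVec_eq {A B : Matrix ι ι R} {x : ι → R} {d : ℕ}
    (h : ∀ i ≤ d, (A ^ i) *ᵥ x = (B ^ i) *ᵥ x) {p : R[X]} (hp : p.natDegree ≤ d) :
    aeval A p *ᵥ x = aeval B p *ᵥ x := by
  simp only [aeval_eq_sum_range, sum_mulVec, smul_mulVec]
  refine Finset.sum_congr rfl fun i hi => ?_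
  rw [h i (by have := Finset.mem_range.mp hi; omega)]

theorem pow_mulVec_eq_of_pow_mulVec_eq_of_aeval_eq_zero {A B : Matrix ι ι R} {x : ι → R}
    {q : R[X]} (hq : q.Monic) (hAq : aeval A q = 0)
    (h : ∀ i ≤ q.natDegree, (A ^ i) *ᵥ x = (B ^ i) *ᵥ x) (m : ℕ) :
    (A ^ m) *ᵥ x = (B ^ m) *ᵥ x := by
  have hBq : aeval B q *ᵥ x = 0 := by
    rw [← aeval_mulVec_eq_of_pow_mulVec_eq h le_rfl, hAq, zero_mulVec]
  have hrem : aeval A (X ^ m %ₘ q) *ᵥ x = aeval B (X ^ m %ₘ q) *ᵥ x :=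
    aeval_mulVec_eq_of_pow_mulVec_eq h (natDegree_modByMonic_le _ hq)
  have hdiv (C : Matrix ι ι R) :
      C ^ m = aeval C (X ^ m %ₘ q) + aeval C (X ^ m /ₘ q) * aeval C q := by
    rw [← map_mul, ← map_add, mul_comm, modByMonic_add_div, map_pow, aeval_X]
  rw [hdiv A, hdiv B, add_mulVec, add_mulVec, hAq, mul_zero, zero_mulVec, add_zero,
    ← mulVec_mulVec, hBq, mulVec_zero, add_zero, hrem]

theorem pow_mulVec_eq_of_forall_le_card {A B : Matrix ι ι R} {x : ι → R} [Nontrivial R]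
    (h : ∀ i ≤ Fintype.card ι, (A ^ i) *ᵥ x = (B ^ i) *ᵥ x) (m : ℕ) :
    (A ^ m) *ᵥ x = (B ^ m) *ᵥ x :=
  pow_mulVec_eq_of_pow_mulVec_eq_of_aeval_eq_zero A.charpoly_monic A.aeval_self_charpoly
    (by rwa [charpoly_natDegree_eq_dim]) m

end Matrix

/-- For identifying a linear system from a single trajectory started at `x`,
observations beyond the `n`-th step carry no extra information:
for `k ≥ n`, the set of matrices agreeing with `A⋆` on `x, …, A⋆ᵏ x` equals the set
agreeing on `x, …, A⋆ⁿ x`. -/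
theorem stmt_5 (n : ℕ) (Astar : Matrix (Fin n) (Fin n) ℝ) (x : Fin n → ℝ)
    (k : ℕ) (hk : n ≤ k) :
    {A : Matrix (Fin n) (Fin n) ℝ | ∀ i, 1 ≤ i → i ≤ k → (A ^ i) *ᵥ x = (Astar ^ i) *ᵥ x} =
      {A : Matrix (Fin n) (Fin n) ℝ | ∀ i, 1 ≤ i → i ≤ n → (A ^ i) *ᵥ x = (Astar ^ i) *ᵥ x} := by
  ext A
  refine ⟨fun h i hi1 hin => h i hi1 (hin.trans hk), fun h i _ _ => ?_⟩
  refine pow_mulVec_eq_of_forall_le_card (fun j hj => ?_) i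
  rcases Nat.eq_zero_or_pos j with rfl | hj0
  · simp only [pow_zero]
  · exact h j hj0 (by simpa using hj)
end

section
/- Let S ⊂ ℝ^n be a compact set and let U_0 ⊆ ℝ^{n×n} be a closed convex set of matrices. If the set S₀¹ = {x ∈ S : A x ∈ S for all A ∈ U_0} has nonempty interior in ℝ^n, then U_0 is bounded. -/
open Matrix

/-- If the safety region `S` is compact and the one-step safe set
`S₀¹ = {x ∈ S : A x ∈ S for all A ∈ U₀}` has nonempty interior, then the closed
convex uncertainty set `U₀` of matrices is bounded. -/
theorem stmt_6 (n : ℕ) (S : Set (Fin n → ℝ)) (hS : IsCompact S)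
    (U0 : Set (Matrix (Fin n) (Fin n) ℝ)) (hclosed : IsClosed U0) (hconv : Convex ℝ U0)
    (hint : (interior {x ∈ S | ∀ A ∈ U0, A *ᵥ x ∈ S}).Nonempty) :
    ∃ C : ℝ, ∀ A ∈ U0, ∀ i j, |A i j| ≤ C := by
  obtain ⟨x₀, hx₀⟩ := hint
  obtain ⟨ε, hε, hball⟩ := Metric.isOpen_iff.mp isOpen_interior x₀ hx₀
  obtain ⟨M, hM⟩ := hS.isBounded.subset_closedBall 0
  have hMnorm : ∀ y ∈ S, ‖y‖ ≤ M := by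
    intro y hy
    have := hM hy
    rwa [Metric.mem_closedBall, dist_zero_right] at this
  refine ⟨4 * M / ε, fun A hA i j => ?_⟩
  have hx₀mem : x₀ ∈ {x ∈ S | ∀ A ∈ U0, A *ᵥ x ∈ S} := interior_subset hx₀
  set x₁ : Fin n → ℝ := x₀ + (ε / 2) • (Pi.single j 1 : Fin n → ℝ) with hx₁def
  have hx₁ : x₁ ∈ {x ∈ S | ∀ A ∈ U0, A *ᵥ x ∈ S} := by
    apply interior_subset
    apply hball
    rw [Metric.mem_ball, dist_eq_norm]
    have h1 : x₁ - x₀ = (ε / 2) • (Pi.single j 1 : Fin n → ℝ) := by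
      rw [hx₁def]; abel
    rw [h1, norm_smul, Pi.norm_single, norm_one, mul_one, Real.norm_eq_abs,
      abs_of_pos (by linarith)]
    linarith
  have hA0 : A *ᵥ x₀ ∈ S := hx₀mem.2 A hA
  have hA1 : A *ᵥ x₁ ∈ S := hx₁.2 A hA
  have key : (A *ᵥ x₁) i - (A *ᵥ x₀) i = (ε / 2) * A i j := by
    rw [hx₁def, mulVec_add, mulVec_smul, mulVec_single]
    simp
  have h0 : |(A *ᵥ x₀) i| ≤ M := by
    calc |(A *ᵥ x₀) i| = ‖(A *ᵥ x₀) i‖ := rfl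
      _ ≤ ‖A *ᵥ x₀‖ := norm_le_pi_norm _ i
      _ ≤ M := hMnorm _ hA0
  have h1 : |(A *ᵥ x₁) i| ≤ M := by
    calc |(A *ᵥ x₁) i| = ‖(A *ᵥ x₁) i‖ := rfl
      _ ≤ ‖A *ᵥ x₁‖ := norm_le_pi_norm _ i
      _ ≤ M := hMnorm _ hA1
  have h2 : (ε / 2) * |A i j| ≤ 2 * M := by
    have : |(ε / 2) * A i j| ≤ 2 * M := by
      rw [← key]
      calc |(A *ᵥ x₁) i - (A *ᵥ x₀) i| ≤ |(A *ᵥ x₁) i| + |(A *ᵥ x₀) i| := abs_sub _ _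
        _ ≤ 2 * M := by linarith
    rwa [abs_mul, abs_of_pos (by linarith)] at this
  rw [le_div_iff₀ hε]
  linarith
end

section
/- Let S ⊂ ℝ^n be a compact set and U_0 ⊆ ℝ^{n×n} a set of matrices. Define S₀^∞ = {x ∈ ℝ^n : A^t x ∈ S for all A ∈ U_0 and all integers t ≥ 0} (where A^0 x = x). If S₀^∞ has nonempty interior in ℝ^n, then every matrix A ∈ U_0 has spectral radius at most one, i.e., every complex eigenvalue λ of A satisfies |λ| ≤ 1. -/
/-!
If the closed ball of radius `r` about `x₀` lies in the safe set and `S` lies in the ball of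
radius `M` about `0`, then by linearity every power `Aᵗ` maps the ball of radius `r` about `0`
into the ball of radius `2M`, so the powers are uniformly bounded: `‖Aᵗ‖ ≤ 2M / r` in the
`ℓ∞` operator norm. An eigenvalue `μ` of `A` gives the eigenvalue `μᵗ` of `Aᵗ`, so
`‖μ‖ᵗ ≤ ‖Aᵗ‖` stays bounded and `‖μ‖ ≤ 1`.
-/

open Matrix

theorem ContinuousLinearMap.opNorm_le_div_of_closedBall_zero_bound {E F : Type*}
    [NormedAddCommGroup E] [NormedSpace ℝ E] [NormedAddCommGroup F] [NormedSpace ℝ F]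
    (f : E →L[ℝ] F) {r c : ℝ} (hr : 0 < r)
    (h : ∀ z ∈ Metric.closedBall (0 : E) r, ‖f z‖ ≤ c) : ‖f‖ ≤ c / r := by
  have hc : 0 ≤ c := (norm_nonneg _).trans (h 0 (Metric.mem_closedBall_self hr.le))
  refine f.opNorm_le_bound (by positivity) fun z => ?_
  rcases eq_or_ne z 0 with rfl | hz
  · simp
  have hz' : 0 < ‖z‖ := norm_pos_iff.mpr hz
  have hw : ‖f ((r / ‖z‖) • z)‖ ≤ c :=
    h _ (by simp [norm_smul, abs_of_pos hr, hz'.ne'])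
  rw [map_smul, norm_smul, Real.norm_of_nonneg (by positivity)] at hw
  calc ‖f z‖ = ‖z‖ / r * (r / ‖z‖ * ‖f z‖) := by field_simp
    _ ≤ ‖z‖ / r * c := by gcongr
    _ = c / r * ‖z‖ := by ring

theorem ContinuousLinearMap.opNorm_le_two_mul_div_of_closedBall_bound {E F : Type*}
    [NormedAddCommGroup E] [NormedSpace ℝ E] [NormedAddCommGroup F] [NormedSpace ℝ F]
    (f : E →L[ℝ] F) {x₀ : E} {r M : ℝ} (hr : 0 < r)
    (h : ∀ y ∈ Metric.closedBall x₀ r, ‖f y‖ ≤ M) : ‖f‖ ≤ 2 * M / r := by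
  refine f.opNorm_le_div_of_closedBall_zero_bound hr fun z hz => ?_
  have hx₀ : ‖f x₀‖ ≤ M := h x₀ (Metric.mem_closedBall_self hr.le)
  have hz₀ : ‖f (x₀ + z)‖ ≤ M := h _ (by simpa using hz)
  calc ‖f z‖ = ‖f (x₀ + z) - f x₀‖ := by rw [map_add, add_sub_cancel_left]
    _ ≤ ‖f (x₀ + z)‖ + ‖f x₀‖ := norm_sub_le _ _
    _ ≤ 2 * M := by linarith

theorem spectrum.norm_le_one_of_norm_pow_le {𝕜 A : Type*} [NormedField 𝕜] [NormedRing A]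
    [NormedAlgebra 𝕜 A] [CompleteSpace A] {a : A} {C : ℝ} (hC : ∀ t : ℕ, ‖a ^ t‖ ≤ C)
    {μ : 𝕜} (hμ : μ ∈ spectrum 𝕜 a) : ‖μ‖ ≤ 1 := by
  by_contra! hμ1
  obtain ⟨t, ht⟩ := pow_unbounded_of_one_lt (C * ‖(1 : A)‖) hμ1
  have := spectrum.norm_le_norm_mul_of_mem (spectrum.pow_mem_pow a t hμ)
  rw [norm_pow] at this
  nlinarith [hC t, norm_nonneg (1 : A)]

open scoped Matrix.Norms.Operator

theorem Matrix.linfty_opNorm_map_of_norm_eq {m n α β : Type*} [Fintype m] [Fintype n]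
    [SeminormedAddCommGroup α] [SeminormedAddCommGroup β] (A : Matrix m n α) {f : α → β}
    (hf : ∀ x, ‖f x‖ = ‖x‖) : ‖A.map f‖ = ‖A‖ := by
  have hf' (x : α) : ‖f x‖₊ = ‖x‖₊ := NNReal.eq (hf x)
  simp [linfty_opNorm_def, hf']

theorem Matrix.linfty_opNorm_le_of_closedBall_bound {m n : Type*} [Fintype m] [Fintype n]
    (B : Matrix m n ℝ) {x₀ : n → ℝ} {r M : ℝ} (hr : 0 < r)
    (h : ∀ y ∈ Metric.closedBall x₀ r, ‖B *ᵥ y‖ ≤ M) : ‖B‖ ≤ 2 * M / r := by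
  rw [linfty_opNorm_eq_opNorm]
  exact ContinuousLinearMap.opNorm_le_two_mul_div_of_closedBall_bound _ hr h

/-- If the infinite-step safe set
`S₀^∞ = {x : Aᵗ x ∈ S for all A ∈ U₀ and all t ≥ 0}` has nonempty interior and `S`
is compact, then every matrix in `U₀` has spectral radius at most one. -/
theorem stmt_7 (n : ℕ) (S : Set (Fin n → ℝ)) (hS : IsCompact S)
    (U0 : Set (Matrix (Fin n) (Fin n) ℝ))
    (hint : (interior {x : Fin n → ℝ | ∀ A ∈ U0, ∀ t : ℕ, (A ^ t) *ᵥ x ∈ S}).Nonempty) :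
    ∀ A ∈ U0, ∀ μ ∈ spectrum ℂ (A.map Complex.ofReal), ‖μ‖ ≤ 1 := by
  intro A hA μ hμ
  obtain ⟨x₀, hx₀⟩ := hint
  obtain ⟨r, hr, hball⟩ :=
    Metric.nhds_basis_closedBall.mem_iff.mp (mem_interior_iff_mem_nhds.mp hx₀)
  obtain ⟨M, hM⟩ := hS.isBounded.exists_norm_le
  have hpow (t : ℕ) : ‖A.map Complex.ofReal ^ t‖ ≤ 2 * M / r := by
    have hmap : A.map Complex.ofReal ^ t = (A ^ t).map Complex.ofReal :=
      (map_pow Complex.ofRealHom.mapMatrix A t).symm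
    rw [hmap, linfty_opNorm_map_of_norm_eq _ Complex.norm_real]
    exact (A ^ t).linfty_opNorm_le_of_closedBall_bound hr fun y hy => hM _ (hball hy A hA t)
  exact spectrum.norm_le_one_of_norm_pow_le hpow hμ
end

section
/- Let A ∈ ℝ^{n×n} have spectral radius strictly greater than one (i.e., some complex eigenvalue λ of A satisfies |λ| > 1), and let R ≥ 0. Then the set {x ∈ ℝ^n : ‖A^k x‖ ≤ R for all integers k ≥ 0} (with ‖·‖ the Euclidean norm) has Lebesgue measure zero in ℝ^n. -/
/-!
The set of points whose orbit stays in the ball of radius `R` is convex. If it had an interior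
point `x₀`, say with `x₀ + ε • v` in the set for all unit `v`, then `ε ‖A ^ k v‖ ≤ 2 R`, so the
operator norms of the powers `A ^ k` would be bounded. For the `ℓ∞` operator norm, which is an
algebra norm and does not change when the entries are read in `ℂ`, a complex eigenvalue `μ` of `A`
satisfies `‖μ‖ ^ k ≤ ‖A ^ k‖ * ‖1‖`, hence `‖μ‖ ≤ 1`. So the set has empty interior, and a convex
set with empty interior lies in its frontier, which is Lebesgue-null.
-/

open Matrix MeasureTheory Set

theorem spectrum.norm_le_one_of_bddAbove_norm_pow {𝕜 A : Type*} [NormedField 𝕜] [NormedRing A]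
    [NormedAlgebra 𝕜 A] [CompleteSpace A] {a : A}
    (ha : BddAbove (range fun k : ℕ => ‖a ^ k‖)) {μ : 𝕜} (hμ : μ ∈ spectrum 𝕜 a) : ‖μ‖ ≤ 1 := by
  obtain ⟨C, hC⟩ := ha
  by_contra! hμ1
  obtain ⟨k, hk⟩ := pow_unbounded_of_one_lt (C * ‖(1 : A)‖) hμ1
  have hpow : ‖μ‖ ^ k ≤ ‖a ^ k‖ * ‖(1 : A)‖ := by
    simpa only [norm_pow] using
      spectrum.norm_le_norm_mul_of_mem (spectrum.pow_image_subset a k ⟨μ, hμ, rfl⟩)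
  exact hk.not_ge (hpow.trans (mul_le_mul_of_nonneg_right (hC ⟨k, rfl⟩) (norm_nonneg _)))

theorem Convex.addHaar_eq_zero_of_interior_eq_empty {E : Type*} [NormedAddCommGroup E]
    [NormedSpace ℝ E] [MeasurableSpace E] [BorelSpace E] [FiniteDimensional ℝ E]
    (μ : Measure E) [μ.IsAddHaarMeasure] {s : Set E} (hs : Convex ℝ s) (h : interior s = ∅) :
    μ s = 0 :=
  measure_mono_null (by rw [frontier, h, sdiff_empty]; exact subset_closure) (hs.addHaar_frontier μ)

section OrbitBound

variable {ι E F : Type*} [NormedAddCommGroup E] [NormedSpace ℝ E] [SeminormedAddCommGroup F]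
  [NormedSpace ℝ F]

theorem convex_setOf_forall_norm_apply_le (f : ι → E →L[ℝ] F) (R : ℝ) :
    Convex ℝ {x | ∀ i, ‖f i x‖ ≤ R} := by
  have hS : {x | ∀ i, ‖f i x‖ ≤ R} = ⋂ i, (f i : E →ₗ[ℝ] F) ⁻¹' Metric.closedBall 0 R := by
    ext; simp
  rw [hS]
  exact convex_iInter fun i => (convex_closedBall 0 R).linear_preimage _

theorem ContinuousLinearMap.bddAbove_range_norm_of_interior_nonempty (f : ι → E →L[ℝ] F) {R : ℝ}
    (h : (interior {x | ∀ i, ‖f i x‖ ≤ R}).Nonempty) : BddAbove (range fun i => ‖f i‖) := by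
  obtain ⟨x₀, hx₀⟩ := h
  obtain ⟨ε, hε, hball⟩ :=
    Metric.nhds_basis_closedBall.mem_iff.mp (mem_interior_iff_mem_nhds.mp hx₀)
  refine ⟨2 * R / ε, ?_⟩
  rintro _ ⟨i, rfl⟩
  have hR : 0 ≤ R := (norm_nonneg _).trans (hball (Metric.mem_closedBall_self hε.le) i)
  refine (f i).opNorm_le_of_unit_norm (by positivity) fun v hv => ?_
  have hmem : x₀ + ε • v ∈ Metric.closedBall x₀ ε := by
    simp [norm_smul, hv, abs_of_pos hε]
  have hscaled : ε * ‖f i v‖ ≤ 2 * R := calc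
    ε * ‖f i v‖ = ‖f i (x₀ + ε • v) - f i x₀‖ := by
      simp [norm_smul, abs_of_pos hε]
    _ ≤ ‖f i (x₀ + ε • v)‖ + ‖f i x₀‖ := norm_sub_le _ _
    _ ≤ R + R := add_le_add (hball hmem i) (hball (Metric.mem_closedBall_self hε.le) i)
    _ = 2 * R := by ring
  rw [le_div_iff₀ hε, mul_comm]
  exact hscaled

theorem addHaar_setOf_forall_norm_apply_le_eq_zero [MeasurableSpace E] [BorelSpace E]
    [FiniteDimensional ℝ E] (μ : Measure E) [μ.IsAddHaarMeasure] {f : ι → E →L[ℝ] F}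
    (hf : ¬ BddAbove (range fun i => ‖f i‖)) (R : ℝ) : μ {x | ∀ i, ‖f i x‖ ≤ R} = 0 :=
  (convex_setOf_forall_norm_apply_le f R).addHaar_eq_zero_of_interior_eq_empty μ <|
    not_nonempty_iff_eq_empty.mp
      (mt (ContinuousLinearMap.bddAbove_range_norm_of_interior_nonempty f) hf)

end OrbitBound

open scoped Matrix.Norms.Operator

namespace Matrix

theorem linfty_opNorm_map_ofReal {m n : Type*} [Fintype m] [Fintype n] (A : Matrix m n ℝ) :
    ‖A.map Complex.ofReal‖ = ‖A‖ := by
  simp [linfty_opNorm_def, Complex.nnnorm_real]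

theorem norm_le_one_of_mem_spectrum_map_ofReal {n : Type*} [Fintype n] [DecidableEq n]
    {A : Matrix n n ℝ} (hA : BddAbove (range fun k : ℕ => ‖A ^ k‖)) {μ : ℂ}
    (hμ : μ ∈ spectrum ℂ (A.map Complex.ofReal)) : ‖μ‖ ≤ 1 := by
  have hpow (k : ℕ) : ‖A.map Complex.ofReal ^ k‖ = ‖A ^ k‖ := by
    rw [← linfty_opNorm_map_ofReal]
    exact congrArg norm (Matrix.map_pow A Complex.ofRealHom k).symm
  exact spectrum.norm_le_one_of_bddAbove_norm_pow (by simpa only [hpow] using hA) hμ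

end Matrix

theorem pi_norm_le_sqrt_sum_sq {ι : Type*} [Fintype ι] (y : ι → ℝ) : ‖y‖ ≤ √(∑ i, y i ^ 2) :=
  (pi_norm_le_iff_of_nonneg (Real.sqrt_nonneg _)).mpr fun i =>
    Real.abs_le_sqrt (Finset.single_le_sum (fun j _ => sq_nonneg (y j)) (Finset.mem_univ i))

theorem stmt_8_general (n : ℕ) (A : Matrix (Fin n) (Fin n) ℝ)
    (hA : ∃ μ ∈ spectrum ℂ (A.map Complex.ofReal), 1 < ‖μ‖)
    (R : ℝ) :
    volume {x : Fin n → ℝ |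
      ∀ k : ℕ, Real.sqrt (∑ i, (((A ^ k) *ᵥ x) i) ^ 2) ≤ R} = 0 := by
  obtain ⟨μ, hμ, hμ1⟩ := hA
  have hunbdd : ¬ BddAbove (range fun k : ℕ => ‖ContinuousLinearMap.mk (A ^ k).mulVecLin‖) := by
    simp only [← linfty_opNorm_eq_opNorm]
    exact fun h => hμ1.not_ge (norm_le_one_of_mem_spectrum_map_ofReal h hμ)
  refine measure_mono_null (fun x hx => ?_)
    (addHaar_setOf_forall_norm_apply_le_eq_zero volume hunbdd R)
  exact fun k => (pi_norm_le_sqrt_sum_sq _).trans (hx k)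

/-- If a real matrix `A` has some complex eigenvalue of modulus greater than one,
then the set of initial conditions whose entire forward orbit stays in the
(Euclidean) ball of radius `R` has Lebesgue measure zero. -/
theorem stmt_8 (n : ℕ) (A : Matrix (Fin n) (Fin n) ℝ)
    (hA : ∃ μ ∈ spectrum ℂ (A.map Complex.ofReal), 1 < ‖μ‖)
    (R : ℝ) (hR : 0 ≤ R) :
    volume {x : Fin n → ℝ |
      ∀ k : ℕ, Real.sqrt (∑ i, (((A ^ k) *ᵥ x) i) ^ 2) ≤ R} = 0 :=
  stmt_8_general n A hA R
end

section
/- Let h_1,…,h_r ∈ ℝ^n and S = {x ∈ ℝ^n : h_i^T x ≤ 1, i = 1,…,r}. Let A ∈ ℝ^{n×n}, let Q ∈ ℝ^{n×n} be a symmetric positive definite matrix satisfying Q − A Q A^T ⪰ 0 (positive semidefinite) and h_i^T Q h_i ≤ 1 for every i = 1,…,r, and let x ∈ ℝ^n satisfy x^T Q^{-1} x ≤ 1. Then A^t x ∈ S for every integer t ≥ 0. -/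
/-!
`V z = zᵀ Q⁻¹ z` is a Lyapunov function for `z ↦ A z`: the condition `Q ⪰ A Q Aᵀ` is the dual
form of `Aᵀ Q⁻¹ A ⪯ Q⁻¹`, so `V` does not increase along the orbit of `x` and the orbit stays in
the ellipsoid `V ≤ 1`. By Cauchy–Schwarz, `(hᵀ z)² ≤ (hᵀ Q h) V z`, so the ellipsoid lies in `S`.
-/

open Matrix

namespace Matrix

variable {ι : Type*} [Fintype ι]

theorem PosSemidef.dotProduct_mulVec_self_nonneg {M : Matrix ι ι ℝ} (hM : M.PosSemidef)
    (v : ι → ℝ) : 0 ≤ v ⬝ᵥ M *ᵥ v := by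
  simpa using hM.dotProduct_mulVec_nonneg v

theorem PosSemidef.sq_dotProduct_mulVec_le {M : Matrix ι ι ℝ} (hM : M.PosSemidef) (u v : ι → ℝ) :
    (u ⬝ᵥ M *ᵥ v) ^ 2 ≤ (u ⬝ᵥ M *ᵥ u) * (v ⬝ᵥ M *ᵥ v) := by
  classical
  have hsymm : LinearMap.IsSymm (toBilin' M) :=
    LinearMap.BilinForm.isSymm_iff.mp <|
      isSymm_toBilin'_iff_isSymm.mpr (isHermitian_iff_isSymm.mp hM.isHermitian)
  simpa only [toBilin'_apply'] using
    (toBilin' M).apply_sq_le_of_symm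
      (fun w ↦ by simpa only [toBilin'_apply'] using hM.dotProduct_mulVec_self_nonneg w) hsymm u v

variable [DecidableEq ι]

theorem PosDef.mulVec_inv_mulVec {Q : Matrix ι ι ℝ} (hQ : Q.PosDef) (w : ι → ℝ) :
    Q *ᵥ (Q⁻¹ *ᵥ w) = w := by
  rw [mulVec_mulVec, mul_nonsing_inv Q ((isUnit_iff_isUnit_det Q).mp hQ.isUnit), one_mulVec]

-- Cauchy–Schwarz for the `Q`-inner product, applied to `h` and `Q⁻¹ z`.
theorem PosDef.sq_dotProduct_le {Q : Matrix ι ι ℝ} (hQ : Q.PosDef) (h z : ι → ℝ) :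
    (h ⬝ᵥ z) ^ 2 ≤ (h ⬝ᵥ Q *ᵥ h) * (z ⬝ᵥ Q⁻¹ *ᵥ z) := by
  simpa only [hQ.mulVec_inv_mulVec, dotProduct_comm _ z] using
    hQ.posSemidef.sq_dotProduct_mulVec_le h (Q⁻¹ *ᵥ z)

/- With `u = Q⁻¹ A z` and `α = V (A z) = (Aᵀ u)ᵀ z`, Cauchy–Schwarz and `Q ⪰ A Q Aᵀ` give
`α² ≤ (uᵀ A Q Aᵀ u) V z ≤ (uᵀ Q u) V z = α V z`. -/
theorem PosDef.mulVec_dotProduct_inv_mulVec_le {A Q : Matrix ι ι ℝ} (hQ : Q.PosDef)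
    (hAQ : (Q - A * Q * Aᵀ).PosSemidef) (z : ι → ℝ) :
    A *ᵥ z ⬝ᵥ Q⁻¹ *ᵥ (A *ᵥ z) ≤ z ⬝ᵥ Q⁻¹ *ᵥ z := by
  set u := Q⁻¹ *ᵥ (A *ᵥ z)
  set α := A *ᵥ z ⬝ᵥ u
  have hα : 0 ≤ α := hQ.inv.posSemidef.dotProduct_mulVec_self_nonneg (A *ᵥ z)
  have hβ : 0 ≤ z ⬝ᵥ Q⁻¹ *ᵥ z := hQ.inv.posSemidef.dotProduct_mulVec_self_nonneg z
  have hAu : Aᵀ *ᵥ u ⬝ᵥ z = α := by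
    rw [mulVec_transpose, ← dotProduct_mulVec, dotProduct_comm]
  have huQu : u ⬝ᵥ Q *ᵥ u = α := by
    rw [hQ.mulVec_inv_mulVec, dotProduct_comm]
  have hcontract : Aᵀ *ᵥ u ⬝ᵥ Q *ᵥ (Aᵀ *ᵥ u) ≤ u ⬝ᵥ Q *ᵥ u := by
    have := hAQ.dotProduct_mulVec_self_nonneg u
    rwa [sub_mulVec, dotProduct_sub, ← mulVec_mulVec, ← mulVec_mulVec, dotProduct_mulVec u A,
      ← mulVec_transpose, sub_nonneg] at this
  have hsq : α ^ 2 ≤ α * (z ⬝ᵥ Q⁻¹ *ᵥ z) := calc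
    α ^ 2 ≤ (Aᵀ *ᵥ u ⬝ᵥ Q *ᵥ (Aᵀ *ᵥ u)) * (z ⬝ᵥ Q⁻¹ *ᵥ z) := hAu ▸ hQ.sq_dotProduct_le _ z
    _ ≤ α * (z ⬝ᵥ Q⁻¹ *ᵥ z) := by rw [← huQu]; gcongr
  nlinarith

theorem PosDef.antitone_pow_mulVec_dotProduct_inv_mulVec {A Q : Matrix ι ι ℝ} (hQ : Q.PosDef)
    (hAQ : (Q - A * Q * Aᵀ).PosSemidef) (x : ι → ℝ) :
    Antitone fun t : ℕ ↦ A ^ t *ᵥ x ⬝ᵥ Q⁻¹ *ᵥ (A ^ t *ᵥ x) := by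
  refine antitone_nat_of_succ_le fun t ↦ ?_
  simpa only [pow_succ', ← mulVec_mulVec] using hQ.mulVec_dotProduct_inv_mulVec_le hAQ (A ^ t *ᵥ x)

end Matrix

/-- Invariant-ellipsoid certificate of infinite-step safety: if `Q ≻ 0` satisfies
`Q - A Q Aᵀ ⪰ 0` and `hᵢᵀ Q hᵢ ≤ 1` for all facets of
`S = {z : hᵢᵀ z ≤ 1}`, then any `x` with `xᵀ Q⁻¹ x ≤ 1` stays in `S` forever under
`x ↦ A x`. -/
theorem stmt_9 (n r : ℕ) (h : Fin r → Fin n → ℝ)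
    (A Q : Matrix (Fin n) (Fin n) ℝ)
    (hQ : Q.PosDef) (hlyap : (Q - A * Q * Aᵀ).PosSemidef)
    (hpolar : ∀ i, h i ⬝ᵥ (Q *ᵥ h i) ≤ 1)
    (x : Fin n → ℝ) (hx : x ⬝ᵥ (Q⁻¹ *ᵥ x) ≤ 1) :
    ∀ t : ℕ, (A ^ t) *ᵥ x ∈ {z : Fin n → ℝ | ∀ i, h i ⬝ᵥ z ≤ 1} := by
  intro t i
  have hz : A ^ t *ᵥ x ⬝ᵥ Q⁻¹ *ᵥ (A ^ t *ᵥ x) ≤ 1 := by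
    refine (hQ.antitone_pow_mulVec_dotProduct_inv_mulVec hlyap x (Nat.zero_le t)).trans ?_
    simpa using hx
  have hsq : (h i ⬝ᵥ A ^ t *ᵥ x) ^ 2 ≤ 1 :=
    (hQ.sq_dotProduct_le (h i) _).trans
      (mul_le_one₀ (hpolar i) (hQ.inv.posSemidef.dotProduct_mulVec_self_nonneg _) hz)
  exact le_of_abs_le (sq_le_one_iff_abs_le_one _ |>.mp hsq)
end

section
/- Let U ⊂ ℝ^{n×n} be a compact set of matrices. Then every matrix A ∈ U has spectral radius strictly less than one if and only if there exists a symmetric n×n matrix P whose entries are real polynomials in the n² entries of A, such that: (a) the scalar polynomial (A, y) ↦ y^T P(A) y in the n² + n variables (entries of A, entries of y) is a sum of squares of polynomials, (b) P(A) is positive definite for every A ∈ U, and (c) P(A) − A^T P(A) A is positive definite for every A ∈ U. -/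
open Matrix

/-- Evaluation of a matrix of polynomials in the `n²` entries of a matrix `A`
at the matrix `A`. -/
noncomputable def matPolyEval {n : ℕ}
    (P : Matrix (Fin n) (Fin n) (MvPolynomial (Fin n × Fin n) ℝ))
    (A : Matrix (Fin n) (Fin n) ℝ) : Matrix (Fin n) (Fin n) ℝ :=
  Matrix.of fun i j => MvPolynomial.eval (fun p => A p.1 p.2) (P i j)

/-!
A compact set of stable matrices admits a uniform power `m > 0` with `‖A ^ m‖ < 1` for the
spectral norm: Gelfand's formula gives such a power near each matrix, and multiples of a
contracting power still contract. Then `P(A) = ∑_{k < m} (Aᵏ)ᵀ Aᵏ` works: it is `1` plus a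
positive semidefinite matrix, `P(A) - Aᵀ P(A) A = 1 - (Aᵐ)ᵀ Aᵐ` telescopes, and
`yᵀ P(A) y = ∑_{k < m} ‖Aᵏ y‖²` is visibly a sum of squares. Conversely, if `v` is an
eigenvector of `A` for `μ`, then `v* (P - Aᵀ P A) v = (1 - |μ|²) v* P v` forces `|μ| < 1`.
-/

open Finset Filter
open scoped ComplexOrder

theorem exists_pow_norm_lt_one_of_forall_mem_spectrum {A : Type*} [NormedRing A]
    [NormedAlgebra ℂ A] [CompleteSpace A] (a : A) (h : ∀ z ∈ spectrum ℂ a, ‖z‖ < 1) :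
    ∃ k, 0 < k ∧ ‖a ^ k‖ < 1 := by
  rcases subsingleton_or_nontrivial A with hA | hA
  · exact ⟨1, one_pos, by simp [Subsingleton.elim (a ^ 1) 0]⟩
  have hρ : spectralRadius ℂ a < 1 := by
    exact_mod_cast spectrum.spectralRadius_lt_of_forall_lt a (r := 1)
      fun z hz => by exact_mod_cast h z hz
  have hev := (spectrum.pow_norm_pow_one_div_tendsto_nhds_spectralRadius a).eventually_lt_const hρ
  obtain ⟨k, hk, hk1⟩ := ((eventually_gt_atTop 0).and hev).exists
  refine ⟨k, hk, not_le.mp fun h1 => hk1.not_ge ?_⟩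
  rw [ENNReal.one_le_ofReal]
  exact Real.one_le_rpow h1 (by positivity)

theorem norm_pow_mul_lt_one {A : Type*} [NormedRing A] {a : A} {k : ℕ} (ha : ‖a ^ k‖ < 1)
    {d : ℕ} (hd : d ≠ 0) : ‖a ^ (k * d)‖ < 1 := by
  rw [pow_mul]
  exact (norm_pow_le' _ (Nat.pos_of_ne_zero hd)).trans_lt (pow_lt_one₀ (norm_nonneg _) ha hd)

theorem IsCompact.exists_pow_norm_lt_one {X A : Type*} [TopologicalSpace X] [NormedRing A]
    {K : Set X} (hK : IsCompact K) {f : X → A} (hf : Continuous f)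
    (h : ∀ x ∈ K, ∃ k, 0 < k ∧ ‖f x ^ k‖ < 1) : ∃ m, 0 < m ∧ ∀ x ∈ K, ‖f x ^ m‖ < 1 := by
  let V : ℕ → Set X := fun k => {x | ‖f x ^ (k + 1)‖ < 1}
  have hV : ∀ k, IsOpen (V k) := fun k => isOpen_lt (hf.pow _).norm continuous_const
  have hcover : K ⊆ ⋃ k, V k := fun x hx => by
    obtain ⟨k, hk, hxk⟩ := h x hx
    obtain ⟨j, rfl⟩ := Nat.exists_eq_succ_of_ne_zero hk.ne'
    exact Set.mem_iUnion.mpr ⟨j, hxk⟩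
  obtain ⟨t, ht⟩ := hK.elim_finite_subcover V hV hcover
  have ht_pos : 0 < ∏ k ∈ t, (k + 1) := prod_pos fun k _ => k.succ_pos
  refine ⟨∏ k ∈ t, (k + 1), ht_pos, fun x hx => ?_⟩
  obtain ⟨k, hk, hxk⟩ := Set.mem_iUnion₂.mp (ht hx)
  obtain ⟨d, hd⟩ := dvd_prod_of_mem (fun k => k + 1) hk
  have hd0 : d ≠ 0 := by
    rintro rfl
    exact ht_pos.ne' (hd.trans (mul_zero _))
  rw [hd]
  exact norm_pow_mul_lt_one hxk hd0

theorem IsSumSq.exists_fin_sum_sq {R : Type*} [CommSemiring R] {s : R} (hs : IsSumSq s) :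
    ∃ (k : ℕ) (q : Fin k → R), s = ∑ t, q t ^ 2 := by
  induction hs with
  | zero => exact ⟨0, Fin.elim0, by simp⟩
  | sq_add a _ ih =>
    obtain ⟨k, q, rfl⟩ := ih
    exact ⟨k + 1, Fin.cons a q, by simp [Fin.sum_univ_succ, sq]⟩

theorem sum_sum_mul_mul_eq_dotProduct_mulVec {ι R : Type*} [Fintype ι] [CommSemiring R]
    (M : Matrix ι ι R) (y : ι → R) : ∑ i, ∑ j, y i * y j * M i j = y ⬝ᵥ (M *ᵥ y) := by
  simp only [dotProduct, mulVec, Finset.mul_sum]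
  exact sum_congr rfl fun i _ => sum_congr rfl fun j _ => by ring

theorem star_dotProduct_self_eq_norm_sq {ι 𝕜 : Type*} [Fintype ι] [RCLike 𝕜] (x : ι → 𝕜) :
    star x ⬝ᵥ x = ((‖WithLp.toLp 2 x‖ ^ 2 : ℝ) : 𝕜) := by
  simp [EuclideanSpace.norm_sq_eq, dotProduct, RCLike.conj_mul]

namespace Matrix

variable {n R S : Type*} [Fintype n]

theorem transpose_map_ofReal {l m : Type*} (A : Matrix l m ℝ) :
    Aᵀ.map Complex.ofReal = (A.map Complex.ofReal)ᴴ := by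
  ext; simp

theorem PosDef.of_map_ofReal {M : Matrix n n ℝ} (h : (M.map Complex.ofReal).PosDef) :
    M.PosDef := by
  refine .of_dotProduct_mulVec_pos ?_ fun x hx => ?_
  · refine Matrix.ext fun i j => Complex.ofReal_injective ?_
    simpa using congrFun (congrFun h.isHermitian i) j
  · have hcast : star (Complex.ofReal ∘ x) ⬝ᵥ (M.map Complex.ofReal *ᵥ (Complex.ofReal ∘ x))
        = ((star x ⬝ᵥ (M *ᵥ x) : ℝ) : ℂ) := by
      simp [dotProduct, mulVec, Complex.conj_ofReal]
    have hpos := h.dotProduct_mulVec_pos (x := Complex.ofReal ∘ x) (by simpa [funext_iff] using hx)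
    rwa [hcast, Complex.zero_lt_real] at hpos

variable [DecidableEq n]

theorem PosDef.map_ofReal {M : Matrix n n ℝ} (h : M.PosDef) :
    (M.map Complex.ofReal).PosDef := by
  obtain ⟨m, v, hv⟩ := posSemidef_iff_eq_sum_vecMulVec.mp h.posSemidef
  refine (PosSemidef.posDef_iff_isUnit ?_).mpr (h.isUnit.map Complex.ofRealHom.mapMatrix)
  refine posSemidef_iff_eq_sum_vecMulVec.mpr ⟨m, fun i => Complex.ofReal ∘ v i, ?_⟩
  rw [hv]
  ext i j
  simp [vecMulVec_apply, Matrix.sum_apply]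

theorem exists_mulVec_eq_smul_of_mem_spectrum {K : Type*} [Field K]
    {B : Matrix n n K} {μ : K} (hμ : μ ∈ spectrum K B) : ∃ v, v ≠ 0 ∧ B *ᵥ v = μ • v := by
  rw [← spectrum_toLin', ← Module.End.hasEigenvalue_iff_mem_spectrum] at hμ
  obtain ⟨v, hv⟩ := hμ.exists_hasEigenvector
  exact ⟨v, hv.2, by simpa using hv.apply_eq_smul⟩

theorem norm_lt_one_of_mem_spectrum_of_posDef {𝕜 : Type*} [RCLike 𝕜]
    {Q B : Matrix n n 𝕜} (hQ : Q.PosDef) (hB : (Q - Bᴴ * Q * B).PosDef) {μ : 𝕜}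
    (hμ : μ ∈ spectrum 𝕜 B) : ‖μ‖ < 1 := by
  obtain ⟨v, hv, hBv⟩ := exists_mulVec_eq_smul_of_mem_spectrum hμ
  obtain ⟨c, hc, hvQv⟩ := RCLike.pos_iff_exists_ofReal.mp (hQ.dotProduct_mulVec_pos hv)
  have hdecr : star v ⬝ᵥ ((Q - Bᴴ * Q * B) *ᵥ v) = (((1 - ‖μ‖ ^ 2) * c : ℝ) : 𝕜) := by
    have hBQB : star v ⬝ᵥ ((Bᴴ * Q * B) *ᵥ v) = star (B *ᵥ v) ⬝ᵥ (Q *ᵥ (B *ᵥ v)) := by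
      rw [← mulVec_mulVec, ← mulVec_mulVec, dotProduct_mulVec, ← star_mulVec]
    rw [sub_mulVec, dotProduct_sub, hBQB, hBv, mulVec_smul, star_smul, smul_dotProduct,
      dotProduct_smul, smul_smul, smul_eq_mul, RCLike.star_def, RCLike.conj_mul, ← hvQv]
    push_cast
    ring
  have h := hB.dotProduct_mulVec_pos hv
  rw [hdecr, RCLike.ofReal_pos] at h
  have : ‖μ‖ ^ 2 < 1 := by nlinarith
  exact (sq_lt_one_iff₀ (norm_nonneg μ)).mp this

theorem norm_lt_one_of_mem_spectrum_map_ofReal {Q A : Matrix n n ℝ} (hQ : Q.PosDef)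
    (hA : (Q - Aᵀ * Q * A).PosDef) {μ : ℂ} (hμ : μ ∈ spectrum ℂ (A.map Complex.ofReal)) :
    ‖μ‖ < 1 := by
  refine norm_lt_one_of_mem_spectrum_of_posDef hQ.map_ofReal ?_ hμ
  have hmap : (Q - Aᵀ * Q * A).map Complex.ofReal = Q.map Complex.ofReal
      - (A.map Complex.ofReal)ᴴ * Q.map Complex.ofReal * A.map Complex.ofReal := by
    rw [← transpose_map_ofReal]
    ext i j
    simp [Matrix.sub_apply, mul_apply, Finset.sum_mul]
  exact hmap ▸ hA.map_ofReal

section L2Operator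

open scoped Matrix.Norms.L2Operator

theorem posDef_one_sub_conjTranspose_mul_self {𝕜 : Type*} [RCLike 𝕜]
    {B : Matrix n n 𝕜} (hB : ‖B‖ < 1) : (1 - Bᴴ * B).PosDef := by
  refine .of_dotProduct_mulVec_pos (isHermitian_one.sub (isHermitian_conjTranspose_mul_self B))
    fun x hx => ?_
  have hquad : star x ⬝ᵥ ((1 - Bᴴ * B) *ᵥ x)
      = ((‖WithLp.toLp 2 x‖ ^ 2 - ‖WithLp.toLp 2 (B *ᵥ x)‖ ^ 2 : ℝ) : 𝕜) := by
    rw [sub_mulVec, one_mulVec, dotProduct_sub, ← mulVec_mulVec, dotProduct_mulVec,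
      ← star_mulVec, RCLike.ofReal_sub, star_dotProduct_self_eq_norm_sq,
      star_dotProduct_self_eq_norm_sq]
  have hx : 0 < ‖WithLp.toLp 2 x‖ := by simpa using hx
  rw [hquad, RCLike.ofReal_pos, sub_pos]
  calc _ ≤ (‖B‖ * ‖WithLp.toLp 2 x‖) ^ 2 := by gcongr; exact B.l2_opNorm_mulVec _
    _ < ‖WithLp.toLp 2 x‖ ^ 2 := by
      rw [mul_pow]
      exact mul_lt_of_lt_one_left (by positivity) (pow_lt_one₀ (norm_nonneg _) hB two_ne_zero)

end L2Operator

def lyapunovPartialSum [Semiring R] (A : Matrix n n R) (m : ℕ) : Matrix n n R :=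
  ∑ k ∈ range m, (A ^ k)ᵀ * A ^ k

theorem lyapunovPartialSum_transpose [CommSemiring R] (A : Matrix n n R) (m : ℕ) :
    (lyapunovPartialSum A m)ᵀ = lyapunovPartialSum A m := by
  simp only [lyapunovPartialSum, transpose_sum, transpose_mul, transpose_transpose]

theorem map_lyapunovPartialSum [Semiring R] [Semiring S] (f : R →+* S)
    (A : Matrix n n R) (m : ℕ) :
    (lyapunovPartialSum A m).map f = lyapunovPartialSum (A.map f) m := by
  rw [lyapunovPartialSum, lyapunovPartialSum, ← RingHom.mapMatrix_apply, map_sum]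
  refine sum_congr rfl fun k _ => ?_
  rw [map_mul, map_pow, RingHom.mapMatrix_apply, RingHom.mapMatrix_apply, transpose_map,
    ← RingHom.mapMatrix_apply, map_pow, RingHom.mapMatrix_apply]

theorem lyapunovPartialSum_sub_transpose_mul_mul [CommRing R]
    (A : Matrix n n R) (m : ℕ) :
    lyapunovPartialSum A m - Aᵀ * lyapunovPartialSum A m * A = 1 - (A ^ m)ᵀ * A ^ m := by
  induction m with
  | zero => simp [lyapunovPartialSum]
  | succ m ih =>
    rw [lyapunovPartialSum, sum_range_succ, ← lyapunovPartialSum, mul_add, add_mul,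
      add_sub_add_comm, ih, pow_succ, transpose_mul]
    noncomm_ring

theorem posDef_lyapunovPartialSum (A : Matrix n n ℝ) {m : ℕ} (hm : 0 < m) :
    (lyapunovPartialSum A m).PosDef := by
  obtain ⟨m, rfl⟩ := Nat.exists_eq_add_of_lt hm
  rw [lyapunovPartialSum, zero_add, sum_range_succ', pow_zero, transpose_one, one_mul]
  refine PosDef.posSemidef_add ?_ PosDef.one
  refine sum_induction _ _ (fun _ _ => PosSemidef.add) PosSemidef.zero fun k _ => ?_
  simpa using posSemidef_conjTranspose_mul_self (A ^ (k + 1))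

theorem isSumSq_sum_sum_mul_mul_map_lyapunovPartialSum [CommSemiring R]
    [CommSemiring S] (f : R →+* S) (A : Matrix n n R) (m : ℕ) (y : n → S) :
    IsSumSq (∑ i, ∑ j, y i * y j * f (lyapunovPartialSum A m i j)) := by
  rw [show ∑ i, ∑ j, y i * y j * f (lyapunovPartialSum A m i j)
      = y ⬝ᵥ ((lyapunovPartialSum A m).map f *ᵥ y) from sum_sum_mul_mul_eq_dotProduct_mulVec _ y,
    map_lyapunovPartialSum, lyapunovPartialSum, sum_mulVec, dotProduct_sum]
  refine IsSumSq.sum fun k _ => ?_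
  rw [← mulVec_mulVec, dotProduct_mulVec, vecMul_transpose]
  exact IsSumSq.sum_mul_self _ _

end Matrix

open scoped Matrix.Norms.L2Operator in
theorem IsCompact.exists_pow_posDef_one_sub_transpose_mul_self {n : Type*} [Fintype n]
    [DecidableEq n] {U : Set (Matrix n n ℝ)} (hU : IsCompact U)
    (hU_stable : ∀ A ∈ U, ∀ μ ∈ spectrum ℂ (A.map Complex.ofReal), ‖μ‖ < 1) :
    ∃ m, 0 < m ∧ ∀ A ∈ U, (1 - (A ^ m)ᵀ * A ^ m).PosDef := by
  obtain ⟨m, hm, hcontr⟩ := hU.exists_pow_norm_lt_one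
    (continuous_id.matrix_map Complex.continuous_ofReal)
    fun A hA => exists_pow_norm_lt_one_of_forall_mem_spectrum _ (hU_stable A hA)
  refine ⟨m, hm, fun A hA => PosDef.of_map_ofReal ?_⟩
  have hpow : (A ^ m).map Complex.ofReal = (A.map Complex.ofReal) ^ m :=
    map_pow Complex.ofRealHom.mapMatrix A m
  have hmap (M : Matrix n n ℝ) : (1 - Mᵀ * M).map Complex.ofReal
      = 1 - (M.map Complex.ofReal)ᴴ * M.map Complex.ofReal := by
    ext i j
    simp [Matrix.sub_apply, one_apply, mul_apply, apply_ite Complex.ofReal]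
  rw [hmap, hpow]
  exact posDef_one_sub_conjTranspose_mul_self (hcontr A hA)

theorem matPolyEval_lyapunovPartialSum_mvPolynomialX {n : ℕ} (A : Matrix (Fin n) (Fin n) ℝ)
    (m : ℕ) :
    matPolyEval (lyapunovPartialSum (mvPolynomialX (Fin n) (Fin n) ℝ) m) A
      = lyapunovPartialSum A m := by
  have hmap (P : Matrix (Fin n) (Fin n) (MvPolynomial (Fin n × Fin n) ℝ)) :
      matPolyEval P A = P.map (MvPolynomial.eval fun p => A p.1 p.2) := rfl
  rw [hmap, map_lyapunovPartialSum]
  exact congrArg (lyapunovPartialSum · m) (mvPolynomialX_mapMatrix_eval A)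

/-- A compact set `U` of matrices consists only of Schur-stable matrices
(spectral radius `< 1`) if and only if there is a symmetric matrix `P(A)` of
polynomials in the entries of `A` which is an SOS matrix (i.e. `yᵀ P(A) y` is a sum
of squares of polynomials in `(A, y)`), with `P(A) ≻ 0` and `P(A) - Aᵀ P(A) A ≻ 0`
for every `A ∈ U`. -/
theorem stmt_11 (n : ℕ) (U : Set (Matrix (Fin n) (Fin n) ℝ)) (hU : IsCompact U) :
    (∀ A ∈ U, ∀ μ ∈ spectrum ℂ (A.map Complex.ofReal), ‖μ‖ < 1) ↔
    ∃ P : Matrix (Fin n) (Fin n) (MvPolynomial (Fin n × Fin n) ℝ),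
      Pᵀ = P ∧
      (∃ (k : ℕ) (q : Fin k → MvPolynomial ((Fin n × Fin n) ⊕ Fin n) ℝ),
        (∑ i : Fin n, ∑ j : Fin n,
          MvPolynomial.X (Sum.inr i) * MvPolynomial.X (Sum.inr j) *
            MvPolynomial.rename Sum.inl (P i j)) = ∑ t, q t ^ 2) ∧
      (∀ A ∈ U, (matPolyEval P A).PosDef) ∧
      (∀ A ∈ U, (matPolyEval P A - Aᵀ * matPolyEval P A * A).PosDef) := by
  constructor
  · intro hU_stable
    obtain ⟨m, hm, hcontr⟩ := hU.exists_pow_posDef_one_sub_transpose_mul_self hU_stable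
    have hsos := (isSumSq_sum_sum_mul_mul_map_lyapunovPartialSum
      (MvPolynomial.rename Sum.inl).toRingHom (mvPolynomialX (Fin n) (Fin n) ℝ) m
      fun i => MvPolynomial.X (Sum.inr i)).exists_fin_sum_sq
    refine ⟨lyapunovPartialSum (mvPolynomialX (Fin n) (Fin n) ℝ) m,
      lyapunovPartialSum_transpose _ m, hsos, fun A _ => ?_, fun A hA => ?_⟩
    · rw [matPolyEval_lyapunovPartialSum_mvPolynomialX]
      exact posDef_lyapunovPartialSum A hm
    · rw [matPolyEval_lyapunovPartialSum_mvPolynomialX,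
        lyapunovPartialSum_sub_transpose_mul_mul]
      exact hcontr A hA
  · rintro ⟨P, -, -, hP_pos, hP_decr⟩ A hA μ hμ
    exact norm_lt_one_of_mem_spectrum_map_ofReal (hP_pos A hA) (hP_decr A hA) hμ
end

section
/- Let U ⊂ ℝ^{n×n} be a compact set of matrices such that every A ∈ U has spectral radius strictly less than one. Then there exists a positive integer N such that ‖A^N‖ < 1 for every A ∈ U, where ‖·‖ denotes the operator norm induced by the Euclidean norm on ℝ^n. -/
open Matrix Filter Topology
open scoped ENNReal NNReal

private lemma norm_real_le_complex (n : ℕ) (M : Matrix (Fin n) (Fin n) ℝ) :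
    ‖toEuclideanCLM (𝕜 := ℝ) M‖ ≤ ‖toEuclideanCLM (𝕜 := ℂ) (M.map Complex.ofReal)‖ := by
  refine ContinuousLinearMap.opNorm_le_bound _ (norm_nonneg _) fun x => ?_
  set y : EuclideanSpace ℂ (Fin n) := (WithLp.equiv 2 _).symm (fun i => (x i : ℂ)) with hy_def
  have hy : ‖y‖ = ‖x‖ := by
    simp [hy_def, EuclideanSpace.norm_eq]
  have happ : ‖toEuclideanCLM (𝕜 := ℝ) M x‖
      = ‖toEuclideanCLM (𝕜 := ℂ) (M.map Complex.ofReal) y‖ := by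
    rw [EuclideanSpace.norm_eq, EuclideanSpace.norm_eq]
    congr 1
    apply Finset.sum_congr rfl
    intro i _
    have h1 : (toEuclideanCLM (𝕜 := ℝ) M x) i = M.mulVec (fun j => x j) i := rfl
    have h2 : (toEuclideanCLM (𝕜 := ℂ) (M.map Complex.ofReal) y) i
        = (M.map Complex.ofReal).mulVec (fun j => (x j : ℂ)) i := rfl
    rw [h1, h2]
    have : (M.map Complex.ofReal).mulVec (fun j => (x j : ℂ)) i
        = ((M.mulVec (fun j => x j) i : ℝ) : ℂ) := by
      simp [Matrix.mulVec, dotProduct]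
    rw [this]
    simp
  rw [happ, ← hy]
  exact ContinuousLinearMap.le_opNorm _ _

private lemma exists_pow_norm_lt (n : ℕ) (A : Matrix (Fin n) (Fin n) ℝ)
    (h : ∀ μ ∈ spectrum ℂ (A.map Complex.ofReal), ‖μ‖ < 1) :
    ∃ k : ℕ, 0 < k ∧ ‖Matrix.toEuclideanCLM (𝕜 := ℝ) (A ^ k)‖ < 1 := by
  rcases Nat.eq_zero_or_pos n with hn | hn
  · subst hn
    refine ⟨1, one_pos, ?_⟩
    have : toEuclideanCLM (𝕜 := ℝ) (A ^ 1) = 0 := Subsingleton.elim _ _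
    rw [this, norm_zero]; norm_num
  · haveI : NeZero n := ⟨hn.ne'⟩
    set a := toEuclideanCLM (𝕜 := ℂ) (A.map Complex.ofReal) with ha
    have hspec : spectrum ℂ a = spectrum ℂ (A.map Complex.ofReal) := AlgEquiv.spectrum_eq _ _
    have hrad : spectralRadius ℂ a < 1 := by
      have := spectrum.spectralRadius_lt_of_forall_lt a (r := 1) (fun z hz => by
        rw [hspec] at hz
        exact_mod_cast h z hz)
      simpa using this
    have hev := (spectrum.pow_nnnorm_pow_one_div_tendsto_nhds_spectralRadius a).eventually_lt_const
      hrad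
    obtain ⟨k, hk1, hk⟩ := ((hev.and (eventually_gt_atTop 0)).exists)
    refine ⟨k, hk, ?_⟩
    have hnn : (‖a ^ k‖₊ : ℝ≥0∞) < 1 := by
      by_contra hle
      push_neg at hle
      have h1k : (0 : ℝ) < 1 / k := by positivity
      exact absurd hk1 (not_lt.mpr (ENNReal.one_le_rpow hle h1k))
    have hlt : ‖a ^ k‖ < 1 := by
      rw [ENNReal.coe_lt_one_iff] at hnn
      exact_mod_cast hnn
    calc ‖toEuclideanCLM (𝕜 := ℝ) (A ^ k)‖
        ≤ ‖toEuclideanCLM (𝕜 := ℂ) ((A ^ k).map Complex.ofReal)‖ := norm_real_le_complex n _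
      _ < 1 := by
          have hmap : (A ^ k).map (Complex.ofReal) = (A.map Complex.ofReal) ^ k := by
            simpa using (RingHom.mapMatrix (algebraMap ℝ ℂ)).map_pow A k
          rw [hmap, map_pow]
          exact hlt

private lemma continuous_toEuclideanCLM (n : ℕ) :
    Continuous fun B : Matrix (Fin n) (Fin n) ℝ => toEuclideanCLM (𝕜 := ℝ) B := by
  have : (fun B : Matrix (Fin n) (Fin n) ℝ => toEuclideanCLM (𝕜 := ℝ) B)
      = fun B => (Matrix.toEuclideanLin.trans LinearMap.toContinuousLinearMap) B := rfl
  rw [this]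
  let e : Matrix (Fin n) (Fin n) ℝ ≃ₗ[ℝ]
      (EuclideanSpace ℝ (Fin n) →L[ℝ] EuclideanSpace ℝ (Fin n)) :=
    Matrix.toEuclideanLin.trans LinearMap.toContinuousLinearMap
  exact e.toLinearMap.continuous_of_finiteDimensional

/-- Over a compact family of Schur-stable matrices, some common power is a strict
contraction in the operator norm induced by the Euclidean norm. -/
theorem stmt_12 (n : ℕ) (U : Set (Matrix (Fin n) (Fin n) ℝ)) (hU : IsCompact U)
    (hstable : ∀ A ∈ U, ∀ μ ∈ spectrum ℂ (A.map Complex.ofReal), ‖μ‖ < 1) :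
    ∃ N : ℕ, 0 < N ∧ ∀ A ∈ U, ‖Matrix.toEuclideanCLM (𝕜 := ℝ) (A ^ N)‖ < 1 := by
  classical
  choose k hk hknorm using fun (A : U) => exists_pow_norm_lt n A (hstable A A.2)
  set V : U → Set (Matrix (Fin n) (Fin n) ℝ) :=
    fun A => {B | ‖toEuclideanCLM (𝕜 := ℝ) (B ^ k A)‖ < 1} with hV
  have hopen : ∀ A : U, IsOpen (V A) := by
    intro A
    have hcont : Continuous fun B : Matrix (Fin n) (Fin n) ℝ =>
        ‖toEuclideanCLM (𝕜 := ℝ) (B ^ k A)‖ :=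
      ((continuous_toEuclideanCLM n).comp (continuous_pow (k A))).norm
    exact isOpen_lt hcont continuous_const
  have hcover : U ⊆ ⋃ A : U, V A := fun B hB =>
    Set.mem_iUnion.mpr ⟨⟨B, hB⟩, hknorm ⟨B, hB⟩⟩
  obtain ⟨t, ht⟩ := hU.elim_finite_subcover V hopen hcover
  refine ⟨∏ A ∈ t, k A, Finset.prod_pos (fun A _ => hk A), fun B hB => ?_⟩
  obtain ⟨A, hAt, hBV⟩ := Set.mem_iUnion₂.mp (ht hB)
  obtain ⟨m, hm⟩ := Finset.dvd_prod_of_mem k hAt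
  have hm0 : 0 < m := by
    rcases Nat.eq_zero_or_pos m with h0 | h0
    · exfalso
      have hp : 0 < ∏ A ∈ t, k A := Finset.prod_pos (fun A _ => hk A)
      rw [hm, h0, mul_zero] at hp
      exact lt_irrefl 0 hp
    · exact h0
  rw [hm, pow_mul, map_pow]
  calc ‖(toEuclideanCLM (𝕜 := ℝ) (B ^ k A)) ^ m‖
      ≤ ‖toEuclideanCLM (𝕜 := ℝ) (B ^ k A)‖ ^ m := norm_pow_le' _ hm0
    _ < 1 := pow_lt_one₀ (norm_nonneg _) hBV hm0.ne'
end

section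
/- Let n be a positive integer. The set {(A, x) ∈ ℝ^{n×n} × ℝ^n : det([x, Ax, A²x, …, A^{n−1}x]) = 0}, where [x, Ax, …, A^{n−1}x] denotes the n×n matrix whose columns are x, Ax, …, A^{n−1}x, has Lebesgue measure zero in ℝ^{n×(n+1)}. -/
/-!
The Krylov determinant is a polynomial in the `n² + n` entries of `(A, x)`, and it is not the
zero polynomial: for `A = diag(0, 1, …, n - 1)` and `x = (1, …, 1)` the Krylov matrix is the
Vandermonde matrix of distinct nodes. The zero set of a nonzero real polynomial is null, by
induction on the number of variables: by Fubini, for almost every value of the other variables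
the leading coefficient in the first one does not vanish, which leaves a nonzero univariate
polynomial with finitely many roots.
-/

open Matrix MeasureTheory

namespace MvPolynomial

variable (μ : Measure ℝ) [SigmaFinite μ] [NullSingletonClass μ]

theorem ae_eval_ne_zero_fin {m : ℕ} {p : MvPolynomial (Fin m) ℝ} (hp : p ≠ 0) :
    ∀ᵐ x ∂(Measure.pi fun _ : Fin m => μ), eval x p ≠ 0 := by
  induction m with
  | zero =>
    obtain ⟨a, rfl⟩ := C_surjective (Fin 0) p
    have ha : a ≠ 0 := by rintro rfl; exact hp C_0
    exact .of_forall fun x => by rwa [eval_C]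
  | succ m ih =>
    set q := finSuccEquiv ℝ m p
    have hq : q ≠ 0 := EmbeddingLike.map_ne_zero_iff.mpr hp
    let e := MeasurableEquiv.piFinSuccAbove (fun _ : Fin (m + 1) => ℝ) 0
    have he := measurePreserving_piFinSuccAbove (fun _ : Fin (m + 1) => μ) 0
    have hmeas : MeasurableSet {z : ℝ × (Fin m → ℝ) | eval (e.symm z) p ≠ 0} :=
      (measurableSet_singleton 0).compl.preimage
        ((continuous_eval p).measurable.comp e.symm.measurable)
    have heval : ∀ t y, eval (e.symm (t, y)) p = (q.map (eval y)).eval t := fun t y => by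
      rw [← eval_eq_eval_mv_eval', ← Fin.insertNth_zero']
      rfl
    suffices ∀ᵐ z ∂μ.prod (Measure.pi fun _ : Fin m => μ), eval (e.symm z) p ≠ 0 by
      rw [← he.map_eq, e.measurableEmbedding.ae_map_iff] at this
      simpa using this
    rw [Measure.ae_prod_iff_ae_ae hmeas, Measure.ae_ae_comm hmeas]
    filter_upwards [ih (Polynomial.leadingCoeff_ne_zero.mpr hq)] with y hy
    have hqy : q.map (eval y) ≠ 0 := fun h => hy <| by
      simpa using congrArg (Polynomial.coeff · q.natDegree) h
    filter_upwards [measure_eq_zero_iff_ae_notMem.mp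
      ((Polynomial.finite_setOfPred_isRoot hqy).measure_zero μ)] with t ht
    rw [heval]
    exact ht

theorem ae_eval_ne_zero {σ : Type*} [Fintype σ] {p : MvPolynomial σ ℝ} (hp : p ≠ 0) :
    ∀ᵐ x ∂(Measure.pi fun _ : σ => μ), eval x p ≠ 0 := by
  let e := Fintype.equivFin σ
  have hE := measurePreserving_piCongrLeft (fun _ : σ => μ) e.symm
  rw [← hE.map_eq, MeasurableEquiv.measurableEmbedding _ |>.ae_map_iff]
  filter_upwards [ae_eval_ne_zero_fin μ ((rename_injective e e.injective).ne hp)] with y hy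
  rw [eval_rename] at hy
  convert hy using 3
  funext s
  simp [MeasurableEquiv.coe_piCongrLeft, Equiv.piCongrLeft_apply_eq_cast]

end MvPolynomial

theorem MeasureTheory.measurePreserving_curry (ι κ : Type*) [Fintype ι] [Fintype κ]
    {X : Type*} [MeasurableSpace X] (μ : Measure X) [SigmaFinite μ] :
    MeasurePreserving (MeasurableEquiv.curry ι κ X)
      (Measure.pi fun _ => μ) (Measure.pi fun _ => Measure.pi fun _ => μ) := by
  refine MeasurePreserving.symm _ ⟨(MeasurableEquiv.curry ι κ X).symm.measurable, ?_⟩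
  refine (Measure.pi_eq fun s _ => ?_).symm
  have hbox : (MeasurableEquiv.curry ι κ X).symm ⁻¹' Set.univ.pi s
      = Set.univ.pi fun i => Set.univ.pi fun j => s (i, j) := by
    ext f
    simp [MeasurableEquiv.coe_curry_symm]
  rw [MeasurableEquiv.map_apply, hbox, Measure.pi_pi]
  simp_rw [Measure.pi_pi]
  exact (Fintype.prod_prod_type fun ij => μ (s ij)).symm

section Krylov

variable {R S : Type*} {n : ℕ}

def Matrix.krylov [Semiring R] (A : Matrix (Fin n) (Fin n) R) (x : Fin n → R) :
    Matrix (Fin n) (Fin n) R :=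
  of fun i j => (A ^ (j : ℕ) *ᵥ x) i

theorem Matrix.krylov_map [Semiring R] [Semiring S] (f : R →+* S)
    (A : Matrix (Fin n) (Fin n) R) (x : Fin n → R) :
    (krylov A x).map f = krylov (A.map f) (f ∘ x) := by
  ext i j
  simp [krylov, RingHom.map_mulVec, ← Matrix.map_pow]

theorem Matrix.krylov_diagonal_one [CommRing R] (v : Fin n → R) :
    krylov (diagonal v) 1 = vandermonde v := by
  ext i j
  simp [krylov, diagonal_pow, mulVec_diagonal, vandermonde_apply]

open MvPolynomial in
noncomputable def krylovDetPoly (n : ℕ) (R : Type*) [CommRing R] :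
    MvPolynomial ((Fin n × Fin n) ⊕ Fin n) R :=
  (krylov (of fun i j => X (.inl (i, j))) fun i => X (.inr i)).det

variable [CommRing R]

theorem eval_krylovDetPoly (z : (Fin n × Fin n) ⊕ Fin n → R) :
    MvPolynomial.eval z (krylovDetPoly n R) =
      (krylov (of fun i j => z (.inl (i, j))) fun i => z (.inr i)).det := by
  rw [krylovDetPoly, RingHom.map_det, RingHom.mapMatrix_apply, krylov_map]
  congr 2 <;> ext <;> simp

theorem krylovDetPoly_ne_zero [IsDomain R] [CharZero R] : krylovDetPoly n R ≠ 0 := by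
  let v : Fin n → R := fun i => ((i : ℕ) : R)
  have hv : Function.Injective v := fun i j h => Fin.ext (Nat.cast_injective h)
  intro h
  have := congrArg (MvPolynomial.eval (Sum.elim (fun ij => diagonal v ij.1 ij.2) 1)) h
  rw [eval_krylovDetPoly, map_zero] at this
  exact det_vandermonde_ne_zero_iff.mpr hv (krylov_diagonal_one v ▸ this)

end Krylov

theorem stmt_13_general (n : ℕ) :
    volume {p : (Fin n → Fin n → ℝ) × (Fin n → ℝ) |
      (Matrix.of fun i j : Fin n => ((Matrix.of p.1 ^ (j : ℕ)) *ᵥ p.2) i).det = 0} = 0 := by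
  let E := (MeasurableEquiv.sumPiEquivProdPi fun _ : (Fin n × Fin n) ⊕ Fin n => ℝ).trans
    ((MeasurableEquiv.curry (Fin n) (Fin n) ℝ).prodCongr (.refl _))
  have hE : MeasurePreserving E volume volume :=
    ((measurePreserving_curry _ _ volume).prod (.id volume)).comp
      (volume_measurePreserving_sumPiEquivProdPi _)
  rw [← hE.map_eq, MeasurableEquiv.map_apply, measure_eq_zero_iff_ae_notMem]
  filter_upwards [MvPolynomial.ae_eval_ne_zero volume krylovDetPoly_ne_zero] with z hz
  rwa [eval_krylovDetPoly] at hz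

/-- The set of pairs `(A, x)` whose Krylov matrix `[x, Ax, …, A^(n-1) x]` is singular
has Lebesgue measure zero. -/
theorem stmt_13 (n : ℕ) (hn : 0 < n) :
    volume {p : (Fin n → Fin n → ℝ) × (Fin n → ℝ) |
      (Matrix.of fun i j : Fin n => ((Matrix.of p.1 ^ (j : ℕ)) *ᵥ p.2) i).det = 0} = 0 :=
  stmt_13_general n
end

section
/- Let S = {x ∈ ℝ^n : h_i^T x ≤ b_i, i = 1,…,r} be a polyhedron, U_{0,A} = {A ∈ ℝ^{n×n} : Tr(V_j^T A) ≤ v_j, j = 1,…,s} a polyhedron of matrices, ν a norm on ℝ^n, γ ≥ 0, and d a nonnegative integer. Let x_1,…,x_m ∈ S be pairwise distinct, y_1,…,y_m ∈ ℝ^n, and let G = {g : ℝ^n → ℝ^n : ‖g(z)‖_∞ ≤ γ ν(z)^d for all z ∈ S}. Let U' = {A ∈ U_{0,A} : ‖A x_j − y_j‖_∞ ≤ γ ν(x_j)^d, j = 1,…,m} and assume U' is nonempty. Then for every h ∈ ℝ^n and every x ∈ S with x ∉ {x_1,…,x_m}, the supremum (taken in the extended reals) of h^T(A x + g(x)) over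 all pairs (A, g) with A ∈ U_{0,A}, g ∈ G, and A x_j + g(x_j) = y_j for j = 1,…,m, equals sup{h^T A x : A ∈ U'} + γ ‖h‖_1 ν(x)^d. -/
open Matrix

/-- Decomposition of the worst-case one-step constraint for nonlinear dynamics
`x ↦ A x + g(x)`: for a point `w ∈ S` distinct from all data points, the supremum
of `hᵀ(A w + g(w))` over all consistent pairs `(A, g)` splits as the supremum of
`hᵀ A w` over the reduced matrix uncertainty set `U'` plus `γ ‖h‖₁ ν(w)^d`. -/
theorem stmt_15 (n r s m : ℕ)
    (hvecs : Fin r → Fin n → ℝ) (b : Fin r → ℝ)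
    (V : Fin s → Matrix (Fin n) (Fin n) ℝ) (v : Fin s → ℝ)
    (S : Set (Fin n → ℝ)) (hS : S = {z | ∀ i, hvecs i ⬝ᵥ z ≤ b i})
    (U0A : Set (Matrix (Fin n) (Fin n) ℝ))
    (hU0A : U0A = {A | ∀ j, ((V j)ᵀ * A).trace ≤ v j})
    (ν : (Fin n → ℝ) → ℝ)
    (hνeq : ∀ z, ν z = 0 ↔ z = 0)
    (hνsmul : ∀ (a : ℝ) (z : Fin n → ℝ), ν (a • z) = |a| * ν z)
    (hνtri : ∀ z w, ν (z + w) ≤ ν z + ν w)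
    (γ : ℝ) (hγ : 0 ≤ γ) (d : ℕ)
    (x : Fin m → Fin n → ℝ) (hxS : ∀ j, x j ∈ S) (hxdist : Function.Injective x)
    (y : Fin m → Fin n → ℝ)
    (G : Set ((Fin n → ℝ) → (Fin n → ℝ)))
    (hG : G = {g | ∀ z ∈ S, ∀ i, |g z i| ≤ γ * ν z ^ d})
    (U' : Set (Matrix (Fin n) (Fin n) ℝ))
    (hU' : U' = {A ∈ U0A | ∀ j, ∀ i, |(A *ᵥ x j - y j) i| ≤ γ * ν (x j) ^ d})
    (hU'ne : U'.Nonempty)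
    (h : Fin n → ℝ) (w : Fin n → ℝ) (hwS : w ∈ S) (hw : ∀ j, w ≠ x j) :
    sSup {t : EReal | ∃ A ∈ U0A, ∃ g ∈ G,
        (∀ j, A *ᵥ x j + g (x j) = y j) ∧ t = ((h ⬝ᵥ (A *ᵥ w + g w) : ℝ) : EReal)} =
      sSup {t : EReal | ∃ A ∈ U', t = ((h ⬝ᵥ (A *ᵥ w) : ℝ) : EReal)} +
        ((γ * (∑ i, |h i|) * ν w ^ d : ℝ) : EReal) := by

  -- notation
  classical
  set c : ℝ := γ * (∑ i, |h i|) * ν w ^ d with hc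
  -- nonnegativity of ν
  have hν0 : ν 0 = 0 := (hνeq 0).mpr rfl
  have hνnn : ∀ z, 0 ≤ ν z := by
    intro z
    have h1 : ν (z + (-1 : ℝ) • z) ≤ ν z + ν ((-1 : ℝ) • z) := hνtri _ _
    have h2 : z + (-1 : ℝ) • z = 0 := by
      funext i; simp
    rw [h2, hν0, hνsmul] at h1
    simp at h1
    linarith
  -- the sign vector
  set sg : Fin n → ℝ := fun i => if h i < 0 then (-1 : ℝ) else 1 with hsg
  have hsg_abs : ∀ i, |sg i| = 1 := by
    intro i; by_cases hi : h i < 0 <;> simp [hsg, hi]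
  have hsg_mul : ∀ i, h i * sg i = |h i| := by
    intro i
    by_cases hi : h i < 0
    · rw [hsg]; simp only [if_pos hi]; rw [abs_of_neg hi]; ring
    · rw [hsg]; simp only [if_neg hi]; rw [abs_of_nonneg (not_lt.mp hi)]; ring
  -- for each A ∈ U', a good g
  have key : ∀ A ∈ U', ∃ g ∈ G, (∀ j, A *ᵥ x j + g (x j) = y j) ∧
      (h ⬝ᵥ (A *ᵥ w + g w) : ℝ) = h ⬝ᵥ (A *ᵥ w) + c := by
    intro A hA
    rw [hU'] at hA
    obtain ⟨hA0, hAd⟩ := hA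
    set g : (Fin n → ℝ) → (Fin n → ℝ) := fun z =>
      if hz : ∃ j, z = x j then y hz.choose - A *ᵥ x hz.choose
      else (γ * ν z ^ d) • sg with hgdef
    have hg_at : ∀ j, g (x j) = y j - A *ᵥ x j := by
      intro j
      have hz : ∃ j', x j = x j' := ⟨j, rfl⟩
      have hj' : hz.choose = j := hxdist hz.choose_spec.symm
      simp only [hgdef, dif_pos hz, hj']
    have hg_w : g w = (γ * ν w ^ d) • sg := by
      have hz : ¬ ∃ j, w = x j := by rintro ⟨j, hj⟩; exact hw j hj
      simp only [hgdef, dif_neg hz]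
    refine ⟨g, ?_, ?_, ?_⟩
    · rw [hG]
      intro z hzS i
      by_cases hz : ∃ j, z = x j
      · obtain ⟨j, rfl⟩ := hz
        rw [hg_at j]
        have := hAd j i
        simp only [Pi.sub_apply] at this ⊢
        rw [abs_sub_comm]
        exact this
      · simp only [hgdef, dif_neg hz]
        have hnn : 0 ≤ γ * ν z ^ d := mul_nonneg hγ (pow_nonneg (hνnn z) d)
        simp only [Pi.smul_apply, smul_eq_mul, abs_mul, hsg_abs i,
          abs_of_nonneg hnn, mul_one]
        exact le_rfl
    · intro j
      rw [hg_at j]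
      funext i
      simp
    · rw [hg_w, dotProduct_add]
      have : h ⬝ᵥ ((γ * ν w ^ d) • sg) = c := by
        simp only [dotProduct, Pi.smul_apply, smul_eq_mul, hc]
        rw [Finset.mul_sum, Finset.sum_mul]
        refine Finset.sum_congr rfl fun i _ => ?_
        rw [← hsg_mul i]; ring
      rw [this]
  -- now the two inequalities
  apply le_antisymm
  · apply sSup_le
    rintro t ⟨A, hA, g, hg, hcons, rfl⟩
    -- A ∈ U'
    have hAU' : A ∈ U' := by
      rw [hU']
      refine ⟨hA, fun j i => ?_⟩
      have : A *ᵥ x j - y j = -(g (x j)) := by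
        have := hcons j
        funext k
        have := congrFun this k
        simp only [Pi.add_apply] at this
        simp [Pi.neg_apply, Pi.sub_apply]
        linarith
      rw [this]
      rw [hG] at hg
      simpa using hg (x j) (hxS j) i
    -- bound on h ⬝ᵥ g w
    have hbound : h ⬝ᵥ g w ≤ c := by
      rw [hG] at hg
      have h1 : ∀ i : Fin n, h i * g w i ≤ |h i| * (γ * ν w ^ d) := by
        intro i
        calc h i * g w i ≤ |h i * g w i| := le_abs_self _
          _ = |h i| * |g w i| := abs_mul _ _
          _ ≤ |h i| * (γ * ν w ^ d) :=
            mul_le_mul_of_nonneg_left (hg w hwS i) (abs_nonneg _)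
      calc h ⬝ᵥ g w = ∑ i, h i * g w i := rfl
        _ ≤ ∑ i, |h i| * (γ * ν w ^ d) := Finset.sum_le_sum fun i _ => h1 i
        _ = c := by rw [hc, ← Finset.sum_mul]; ring
    rw [dotProduct_add, EReal.coe_add]
    refine add_le_add ?_ ?_
    · exact le_sSup ⟨A, hAU', rfl⟩
    · exact_mod_cast hbound
  · rw [← EReal.le_sub_iff_add_le (Or.inl (EReal.coe_ne_bot c))
      (Or.inl (EReal.coe_ne_top c))]
    apply sSup_le
    rintro t ⟨A, hA, rfl⟩
    rw [EReal.le_sub_iff_add_le (Or.inl (EReal.coe_ne_bot c))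
      (Or.inl (EReal.coe_ne_top c))]
    obtain ⟨g, hg, hcons, hval⟩ := key A hA
    have hAU0 : A ∈ U0A := by
      rw [hU'] at hA; exact hA.1
    refine le_sSup ⟨A, hAU0, g, hg, hcons, ?_⟩
    rw [hval, EReal.coe_add]
end

section
/- Let A, B ∈ ℝ^{n×n}, γ ≥ 0, λ ≥ 0, and let Q ∈ ℝ^{n×n} be symmetric positive definite. Suppose the 2n×2n block matrix [[Q − A Q A^T, −A Q], [−Q A^T, −Q]] − λ·[[γ² I, 0], [0, −I]] is positive semidefinite and that the spectral norm of B satisfies ‖B‖ ≤ γ. Then (A + B) Q (A + B)^T ⪯ Q, i.e., Q − (A + B) Q (A + B)^T is positive semidefinite. -/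
/-!
Test the block inequality on the vector `(v, Bᵀ v)`. Its upper-left part is exactly the quadratic
form of `Q - (A + B) Q (A + B)ᵀ` at `v`, so that form is at least
`λ (γ² ‖v‖² - ‖Bᵀ v‖²)`, which is nonnegative because `‖Bᵀ‖ = ‖B‖ ≤ γ` (an S-procedure argument).
-/

open Matrix

section

variable {m n : Type*} [Fintype m] [Fintype n]

theorem Real.le_sq_mul_of_sqrt_le_mul_sqrt {a b γ : ℝ} (ha : 0 ≤ a) (hb : 0 ≤ b)
    (h : √a ≤ γ * √b) : a ≤ γ ^ 2 * b :=
  calc a = √a ^ 2 := (Real.sq_sqrt ha).symm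
    _ ≤ (γ * √b) ^ 2 := pow_le_pow_left₀ (Real.sqrt_nonneg a) h 2
    _ = γ ^ 2 * b := by rw [mul_pow, Real.sq_sqrt hb]

theorem dotProduct_self_eq_sum_sq (v : n → ℝ) : v ⬝ᵥ v = ∑ i, v i ^ 2 := by
  simp only [dotProduct, sq]

theorem dotProduct_self_nonneg (v : n → ℝ) : 0 ≤ v ⬝ᵥ v :=
  Finset.sum_nonneg fun i _ => mul_self_nonneg (v i)

theorem dotProduct_sq_le (u v : n → ℝ) : (u ⬝ᵥ v) ^ 2 ≤ (u ⬝ᵥ u) * (v ⬝ᵥ v) := by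
  simpa only [dotProduct, sq] using Finset.sum_mul_sq_le_sq_mul_sq Finset.univ u v

namespace Matrix

theorem transpose_mulVec_dotProduct_self_le {B : Matrix m n ℝ} {c : ℝ} (hc : 0 ≤ c)
    (hB : ∀ u, B *ᵥ u ⬝ᵥ B *ᵥ u ≤ c * (u ⬝ᵥ u)) (v : m → ℝ) :
    Bᵀ *ᵥ v ⬝ᵥ Bᵀ *ᵥ v ≤ c * (v ⬝ᵥ v) := by
  set w := Bᵀ *ᵥ v with hw_def
  have hsq : (w ⬝ᵥ w) * (w ⬝ᵥ w) ≤ (w ⬝ᵥ w) * (c * (v ⬝ᵥ v)) :=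
    calc (w ⬝ᵥ w) * (w ⬝ᵥ w) = (B *ᵥ w ⬝ᵥ v) ^ 2 := by
          rw [← sq, hw_def, dotProduct_mulVec, vecMul_transpose]
      _ ≤ (B *ᵥ w ⬝ᵥ B *ᵥ w) * (v ⬝ᵥ v) := dotProduct_sq_le _ _
      _ ≤ c * (w ⬝ᵥ w) * (v ⬝ᵥ v) :=
          mul_le_mul_of_nonneg_right (hB w) (dotProduct_self_nonneg v)
      _ = (w ⬝ᵥ w) * (c * (v ⬝ᵥ v)) := by ring
  rcases (dotProduct_self_nonneg w).eq_or_lt with hw | hw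
  · rw [← hw]
    exact mul_nonneg hc (dotProduct_self_nonneg v)
  · exact le_of_mul_le_mul_left hsq hw

theorem dotProduct_mulVec_nonneg_of_posSemidef_sub_smul {M N : Matrix n n ℝ} {lam : ℝ}
    (h : (M - lam • N).PosSemidef) (hlam : 0 ≤ lam) {z : n → ℝ} (hz : 0 ≤ z ⬝ᵥ N *ᵥ z) :
    0 ≤ z ⬝ᵥ M *ᵥ z := by
  have hMN := h.dotProduct_mulVec_nonneg z
  rw [star_trivial, sub_mulVec, smul_mulVec, dotProduct_sub, dotProduct_smul, smul_eq_mul]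
    at hMN
  nlinarith [mul_nonneg hlam hz]

variable {R : Type*} [CommRing R]

theorem sumElim_dotProduct_fromBlocks_mulVec_sumElim
    (P : Matrix m m R) (S : Matrix m n R) (T : Matrix n m R) (U : Matrix n n R)
    (v : m → R) (w : n → R) :
    Sum.elim v w ⬝ᵥ fromBlocks P S T U *ᵥ Sum.elim v w =
      v ⬝ᵥ P *ᵥ v + v ⬝ᵥ S *ᵥ w + w ⬝ᵥ T *ᵥ v + w ⬝ᵥ U *ᵥ w := by
  rw [fromBlocks_mulVec, sumElim_dotProduct_sumElim, dotProduct_add, dotProduct_add,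
    Sum.elim_comp_inl, Sum.elim_comp_inr]
  ring

theorem dotProduct_mul_mul_transpose_mulVec (X : Matrix n m R) (Q : Matrix m m R) (v : n → R) :
    v ⬝ᵥ (X * Q * Xᵀ) *ᵥ v = Xᵀ *ᵥ v ⬝ᵥ Q *ᵥ (Xᵀ *ᵥ v) := by
  rw [← mulVec_mulVec, ← mulVec_mulVec, dotProduct_mulVec, mulVec_transpose]

theorem dotProduct_sub_mul_mul_transpose_mulVec_eq_fromBlocks (Q A B : Matrix n n R)
    (v : n → R) :
    v ⬝ᵥ (Q - (A + B) * Q * (A + B)ᵀ) *ᵥ v =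
      Sum.elim v (Bᵀ *ᵥ v) ⬝ᵥ
        fromBlocks (Q - A * Q * Aᵀ) (-(A * Q)) (-(Q * Aᵀ)) (-Q) *ᵥ Sum.elim v (Bᵀ *ᵥ v) := by
  rw [sumElim_dotProduct_fromBlocks_mulVec_sumElim, sub_mulVec, sub_mulVec, dotProduct_sub,
    dotProduct_sub, dotProduct_mul_mul_transpose_mulVec, dotProduct_mul_mul_transpose_mulVec,
    transpose_add, add_mulVec, mulVec_add, add_dotProduct, dotProduct_add, dotProduct_add,
    neg_mulVec, neg_mulVec, neg_mulVec, dotProduct_neg, dotProduct_neg, dotProduct_neg,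
    ← mulVec_mulVec, ← mulVec_mulVec, dotProduct_mulVec v A, ← mulVec_transpose]
  ring

end Matrix

end

theorem stmt_17_general (n : ℕ) (A B : Matrix (Fin n) (Fin n) ℝ) (γ lam : ℝ)
    (hlam : 0 ≤ lam)
    (Q : Matrix (Fin n) (Fin n) ℝ) (hQ : Q.PosDef)
    (hblock : (Matrix.fromBlocks (Q - A * Q * Aᵀ) (-(A * Q)) (-(Q * Aᵀ)) (-Q) -
        lam • Matrix.fromBlocks (γ ^ 2 • (1 : Matrix (Fin n) (Fin n) ℝ)) 0 0
          (-(1 : Matrix (Fin n) (Fin n) ℝ))).PosSemidef)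
    (hB : ∀ v : Fin n → ℝ,
      Real.sqrt (∑ i, ((B *ᵥ v) i) ^ 2) ≤ γ * Real.sqrt (∑ i, v i ^ 2)) :
    (Q - (A + B) * Q * (A + B)ᵀ).PosSemidef := by
  have hB_sq (u : Fin n → ℝ) : B *ᵥ u ⬝ᵥ B *ᵥ u ≤ γ ^ 2 * (u ⬝ᵥ u) := by
    simpa only [dotProduct_self_eq_sum_sq] using
      Real.le_sq_mul_of_sqrt_le_mul_sqrt (by positivity) (by positivity) (hB u)
  have hsymm : (Q - (A + B) * Q * (A + B)ᵀ).IsHermitian := by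
    simpa using hQ.isHermitian.sub (isHermitian_mul_mul_conjTranspose (A + B) hQ.isHermitian)
  refine .of_dotProduct_mulVec_nonneg hsymm fun v => ?_
  rw [star_trivial, dotProduct_sub_mul_mul_transpose_mulVec_eq_fromBlocks]
  refine dotProduct_mulVec_nonneg_of_posSemidef_sub_smul hblock hlam ?_
  rw [sumElim_dotProduct_fromBlocks_mulVec_sumElim]
  simp only [smul_mulVec, one_mulVec, zero_mulVec, neg_mulVec, dotProduct_zero, dotProduct_neg,
    dotProduct_smul, smul_eq_mul]
  linarith [transpose_mulVec_dotProduct_self_le (sq_nonneg γ) hB_sq v]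

/-- The block LMI used for infinite-step safety of nonlinear systems certifies the
common Lyapunov inequality `(A + B) Q (A + B)ᵀ ⪯ Q` for every perturbation `B` of
spectral norm at most `γ`. -/
theorem stmt_17 (n : ℕ) (A B : Matrix (Fin n) (Fin n) ℝ) (γ lam : ℝ)
    (hγ : 0 ≤ γ) (hlam : 0 ≤ lam)
    (Q : Matrix (Fin n) (Fin n) ℝ) (hQ : Q.PosDef)
    (hblock : (Matrix.fromBlocks (Q - A * Q * Aᵀ) (-(A * Q)) (-(Q * Aᵀ)) (-Q) -
        lam • Matrix.fromBlocks (γ ^ 2 • (1 : Matrix (Fin n) (Fin n) ℝ)) 0 0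
          (-(1 : Matrix (Fin n) (Fin n) ℝ))).PosSemidef)
    (hB : ∀ v : Fin n → ℝ,
      Real.sqrt (∑ i, ((B *ᵥ v) i) ^ 2) ≤ γ * Real.sqrt (∑ i, v i ^ 2)) :
    (Q - (A + B) * Q * (A + B)ᵀ).PosSemidef :=
  stmt_17_general n A B γ lam hlam Q hQ hblock hB
end

section
/- Let P ⊆ ℝ^n be a nonempty convex set. Then the linear span of P equals the set {α u − β w : α ≥ 0, β ≥ 0, u ∈ P, w ∈ P}; that is, every finite linear combination of points of P can be written as a difference of two nonnegative multiples of points of P. -/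
lemma aux_cone {n : ℕ} {P : Set (Fin n → ℝ)} (hconv : Convex ℝ P)
    {α α' : ℝ} {u u' : Fin n → ℝ} (hα : 0 ≤ α) (hα' : 0 ≤ α')
    (hu : u ∈ P) (hu' : u' ∈ P) :
    ∃ γ : ℝ, 0 ≤ γ ∧ ∃ z ∈ P, α • u + α' • u' = γ • z := by
  rcases eq_or_lt_of_le (add_nonneg hα hα' : (0:ℝ) ≤ α + α') with h | h
  · have h1 : α = 0 := by linarith
    have h2 : α' = 0 := by linarith
    exact ⟨0, le_refl 0, u, hu, by simp [h1, h2]⟩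
  · refine ⟨α + α', le_of_lt h, (α/(α+α')) • u + (α'/(α+α')) • u', ?_, ?_⟩
    · exact hconv hu hu' (by positivity) (by positivity) (by field_simp)
    · rw [smul_add, smul_smul, smul_smul]
      congr 1 <;> congr 1 <;> field_simp

/-- For a nonempty convex set `P ⊆ ℝⁿ`, the linear span of `P` is exactly the set of
differences of two nonnegative multiples of points of `P`. -/
theorem stmt_18 (n : ℕ) (P : Set (Fin n → ℝ)) (hne : P.Nonempty) (hconv : Convex ℝ P) :
    (Submodule.span ℝ P : Set (Fin n → ℝ)) =
      {v | ∃ α β : ℝ, ∃ u ∈ P, ∃ w ∈ P, 0 ≤ α ∧ 0 ≤ β ∧ v = α • u - β • w} := by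
  obtain ⟨x₀, hx₀⟩ := hne
  let M : Submodule ℝ (Fin n → ℝ) :=
  { carrier := {v | ∃ α β : ℝ, ∃ u ∈ P, ∃ w ∈ P, 0 ≤ α ∧ 0 ≤ β ∧ v = α • u - β • w}
    zero_mem' := ⟨0, 0, x₀, hx₀, x₀, hx₀, le_refl 0, le_refl 0, by simp⟩
    add_mem' := by
      rintro a b ⟨α, β, u, hu, w, hw, hα, hβ, rfl⟩ ⟨α', β', u', hu', w', hw', hα', hβ', rfl⟩
      obtain ⟨γ, hγ, z, hz, hzeq⟩ := aux_cone hconv hα hα' hu hu'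
      obtain ⟨δ, hδ, y, hy, hyeq⟩ := aux_cone hconv hβ hβ' hw hw'
      refine ⟨γ, δ, z, hz, y, hy, hγ, hδ, ?_⟩
      rw [← hzeq, ← hyeq]; abel
    smul_mem' := by
      rintro c v ⟨α, β, u, hu, w, hw, hα, hβ, rfl⟩
      rcases le_or_gt 0 c with hc | hc
      · refine ⟨c * α, c * β, u, hu, w, hw, mul_nonneg hc hα, mul_nonneg hc hβ, ?_⟩
        rw [smul_sub, smul_smul, smul_smul]
      · refine ⟨-c * β, -c * α, w, hw, u, hu,
          mul_nonneg (by linarith) hβ, mul_nonneg (by linarith) hα, ?_⟩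
        rw [smul_sub, smul_smul, smul_smul, neg_mul, neg_mul, neg_smul, neg_smul]
        abel }
  apply le_antisymm
  · have : Submodule.span ℝ P ≤ M := Submodule.span_le.mpr
      (fun p hp => ⟨1, 0, p, hp, x₀, hx₀, zero_le_one, le_refl 0, by simp⟩)
    exact this
  · rintro v ⟨α, β, u, hu, w, hw, hα, hβ, rfl⟩
    exact sub_mem (Submodule.smul_mem _ _ (Submodule.subset_span hu))
      (Submodule.smul_mem _ _ (Submodule.subset_span hw))
end
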